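/- arXiv:1504.03500 — 9 statements merged into one kernel-verified Lean document; each statement's English description precedes it below -/
import Mathlib

section
/- If a cubic graph G admits a circular nowhere-zero r-flow, then G admits a ⌊r⌋-weak bisection. -/
open SimpleGraph

/-- A cubic graph: every vertex has degree 3. -/
def IsCubic {V : Type*} [Fintype V] (G : SimpleGraph V) : Prop :=
  ∀ v : V, Nat.card (G.neighborSet v) = 3

/-- A circular nowhere-zero `r`-flow: an orientation `dir` of `G` together with
a flow value `f` on each directed edge, with values in `[1, r-1]` and flow
conservation at every vertex. -/
structure CNZF {V : Type*} [Fintype V] (G : SimpleGraph V) (r : ℝ) where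
  dir : V → V → Bool
  f : V → V → ℝ
  orients : ∀ u v, G.Adj u v ↔ (dir u v = true ∨ dir v u = true)
  asymm : ∀ u v, dir u v = true → dir v u = false
  lb : ∀ u v, dir u v = true → 1 ≤ f u v
  ub : ∀ u v, dir u v = true → f u v ≤ r - 1
  conserv : ∀ v : V, (∑ u : V, if dir v u = true then f v u else 0)
      = ∑ u : V, if dir u v = true then f u v else 0

/-- Out-degree of a vertex in an orientation. -/
noncomputable def outDeg {V : Type*} (dir : V → V → Bool) (v : V) : ℕ :=
  Nat.card {u | dir v u = true}

/-- Every connected component of the subgraph induced by `S` is a tree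
on at most `m` vertices. -/
def MonoOK {V : Type*} (G : SimpleGraph V) (m : ℕ) (S : Set V) : Prop :=
  (G.induce S).IsAcyclic ∧
    ∀ c : (G.induce S).ConnectedComponent, Nat.card c.supp ≤ m

/-- A `k`-weak bisection, given by its first part `S`. -/
def IsWeakBisection {V : Type*} [Fintype V] (G : SimpleGraph V) (k : ℕ) (S : Set V) : Prop :=
  Nat.card S = Nat.card (Sᶜ : Set V) ∧ MonoOK G (k-2) S ∧ MonoOK G (k-2) (Sᶜ : Set V)

/-- Every monochromatic component of the 2-coloring `c` has at most `m` vertices. -/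
def MonoAtMost {V : Type*} (G : SimpleGraph V) (c : V → Bool) (m : ℕ) : Prop :=
  ∀ b : Bool, ∀ comp : (G.induce {v | c v = b}).ConnectedComponent,
    Nat.card comp.supp ≤ m

/-- Edges of `L_k` (on vertex labels `0, …, 5+2k`): `L_0` is `K_{3,3}` minus an
edge (parts `{0,1,4}` and `{2,3,5}`, edge `45` removed, degree-2 vertices `4,5`);
at step `j` the two new adjacent vertices `4+2j, 5+2j` are attached to the
previous degree-2 vertices `2+2j, 3+2j`. The degree-2 vertices of `L_k` are
`4+2k` and `5+2k`. -/
def LEdge (k : ℕ) (a b : ℕ) : Prop :=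
  (a, b) ∈ ({(0,2),(0,3),(0,5),(1,2),(1,3),(1,5),(4,2),(4,3)} : Set (ℕ × ℕ)) ∨
  ∃ j, 1 ≤ j ∧ j ≤ k ∧
    ((a, b) = (4+2*j, 5+2*j) ∨ (a, b) = (2+2*j, 4+2*j) ∨ (a, b) = (3+2*j, 5+2*j))

/-- The graph `L_k`. -/
def Lgraph (k : ℕ) : SimpleGraph (Fin (6+2*k)) :=
  SimpleGraph.fromRel (fun a b => LEdge k a.val b.val)

/-- Edges of `T_k`: one copy of `L'_k` (the copy of `L_k` on `0..5+2k` with apex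
`6+2k`), two copies of `L'_0` (on `7+2k..12+2k` with apex `13+2k`, and on
`14+2k..19+2k` with apex `20+2k`), and a central vertex `21+2k` adjacent to the
three apexes. -/
def TEdge (k : ℕ) (a b : ℕ) : Prop :=
  LEdge k a b
  ∨ (a = 6+2*k ∧ (b = 4+2*k ∨ b = 5+2*k))
  ∨ (∃ a' b', LEdge 0 a' b' ∧ a = 7+2*k+a' ∧ b = 7+2*k+b')
  ∨ (a = 13+2*k ∧ (b = 11+2*k ∨ b = 12+2*k))
  ∨ (∃ a' b', LEdge 0 a' b' ∧ a = 14+2*k+a' ∧ b = 14+2*k+b')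
  ∨ (a = 20+2*k ∧ (b = 18+2*k ∨ b = 19+2*k))
  ∨ (a = 21+2*k ∧ (b = 6+2*k ∨ b = 13+2*k ∨ b = 20+2*k))

/-- The cubic graph `T_k`. -/
def Tgraph (k : ℕ) : SimpleGraph (Fin (22+2*k)) :=
  SimpleGraph.fromRel (fun a b => TEdge k a.val b.val)

/-- A valid factor of `G`: a spanning subgraph all of whose components are paths
or cycles (equivalently, all degrees are 1 or 2), such that the two endpoints
(degree-1 vertices) of every odd component are non-adjacent in `G`; in particular
no component is an isolated vertex. -/
def IsValidFactor {V : Type*} (G H : SimpleGraph V) : Prop :=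
  H ≤ G ∧
  (∀ v : V, 1 ≤ Nat.card (H.neighborSet v) ∧ Nat.card (H.neighborSet v) ≤ 2) ∧
  ∀ c : H.ConnectedComponent, Odd (Nat.card c.supp) →
    ∀ u v : V, u ∈ c.supp → v ∈ c.supp → u ≠ v →
      Nat.card (H.neighborSet u) = 1 → Nat.card (H.neighborSet v) = 1 → ¬ G.Adj u v

/-- A component of `H` is a cycle iff all its vertices have degree 2 in `H`. -/
def IsCycleComp {V : Type*} (H : SimpleGraph V) (c : H.ConnectedComponent) : Prop :=
  ∀ v ∈ c.supp, Nat.card (H.neighborSet v) = 2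

/-- An odd cycle component. -/
def OddCycleComp {V : Type*} (H : SimpleGraph V) (c : H.ConnectedComponent) : Prop :=
  Odd (Nat.card c.supp) ∧ IsCycleComp H c

/-- An odd path component (a component with an odd number of vertices containing
a degree-1 vertex). -/
def OddPathComp {V : Type*} (H : SimpleGraph V) (c : H.ConnectedComponent) : Prop :=
  Odd (Nat.card c.supp) ∧ ∃ v ∈ c.supp, Nat.card (H.neighborSet v) = 1

noncomputable def numComponents {V : Type*} (H : SimpleGraph V) : ℕ := Nat.card H.ConnectedComponent

noncomputable def numOddCycles {V : Type*} (H : SimpleGraph V) : ℕ :=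
  Nat.card {c : H.ConnectedComponent // OddCycleComp H c}

/-- `H` is a valid factor of `G` with the minimum number of components. -/
def MinimizesComponents {V : Type*} (G H : SimpleGraph V) : Prop :=
  IsValidFactor G H ∧ ∀ H' : SimpleGraph V, IsValidFactor G H' →
    numComponents H ≤ numComponents H'

/-- `H` is a valid factor of `G` minimizing the number of components and,
subject to that, the number of odd cycles. -/
def IsMinValidFactor {V : Type*} (G H : SimpleGraph V) : Prop :=
  MinimizesComponents G H ∧
  ∀ H' : SimpleGraph V, IsValidFactor G H' →
    numComponents H' = numComponents H → numOddCycles H ≤ numOddCycles H'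

/-- An external vertex of a factor: an endpoint of a path component, or a vertex
of an odd cycle component. -/
def ExternalVtx {V : Type*} (H : SimpleGraph V) (v : V) : Prop :=
  Nat.card (H.neighborSet v) = 1 ∨ OddCycleComp H (H.connectedComponentMk v)
section EMTproof
open Finset
namespace EMTaux

variable {V : Type*} [Fintype V] {G : SimpleGraph V} {r : ℝ}

def outFin (dir : V → V → Bool) (v : V) : Finset V :=
  Finset.univ.filter (fun u => dir v u = true)
def inFin (dir : V → V → Bool) (v : V) : Finset V :=
  Finset.univ.filter (fun u => dir u v = true)

section key
variable [DecidableEq V] (dir : V → V → Bool) (Wf : Finset V)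

def intP : Finset (V × V) :=
  Finset.univ.filter (fun p => dir p.1 p.2 = true ∧ p.1 ∈ Wf ∧ p.2 ∈ Wf)
def bOut : Finset (V × V) :=
  Finset.univ.filter (fun p => dir p.1 p.2 = true ∧ p.1 ∈ Wf ∧ p.2 ∉ Wf)
def bIn : Finset (V × V) :=
  Finset.univ.filter (fun p => dir p.1 p.2 = true ∧ p.1 ∉ Wf ∧ p.2 ∈ Wf)

lemma key_count (f : V → V → ℝ) (r : ℝ)
    (lb : ∀ u v, dir u v = true → 1 ≤ f u v) (ub : ∀ u v, dir u v = true → f u v ≤ r - 1)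
    (conserv : ∀ v : V, (∑ u : V, if dir v u = true then f v u else 0)
      = ∑ u : V, if dir u v = true then f u v else 0)
    (hne : Wf.Nonempty)
    (hout : ∀ v ∈ Wf, (outFin dir v).card = 2) (hin : ∀ v ∈ Wf, (inFin dir v).card = 1) :
    (intP dir Wf).card + (bOut dir Wf).card = 2 * Wf.card ∧
    (intP dir Wf).card + (bIn dir Wf).card = Wf.card ∧
    1 ≤ (bIn dir Wf).card ∧
    ((bOut dir Wf).card : ℝ) ≤ ((bIn dir Wf).card : ℝ) * (r - 1) := by
  classical
  set P := intP dir Wf with hP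
  set A := bOut dir Wf with hA
  set B := bIn dir Wf with hB
  have hAdir : ∀ p ∈ A, dir p.1 p.2 = true := by
    intro p hp; rw [hA, bOut, Finset.mem_filter] at hp; exact hp.2.1
  have hBdir : ∀ p ∈ B, dir p.1 p.2 = true := by
    intro p hp; rw [hB, bIn, Finset.mem_filter] at hp; exact hp.2.1
  have hsplitO : ∀ (g : V × V → ℝ),
      (∑ p ∈ P, g p) + (∑ p ∈ A, g p)
        = ∑ v ∈ Wf, ∑ u : V, if dir v u = true then g (v, u) else 0 := by
    intro g
    have hdisj : Disjoint P A := by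
      simp only [hP, hA, Finset.disjoint_left, intP, bOut, Finset.mem_filter]
      tauto
    rw [← Finset.sum_union hdisj]
    have hU : P ∪ A = (Wf ×ˢ Finset.univ).filter (fun p => dir p.1 p.2 = true) := by
      ext p
      simp only [hP, hA, intP, bOut, Finset.mem_union, Finset.mem_filter, Finset.mem_product,
        Finset.mem_univ, true_and, and_true]
      tauto
    rw [hU, Finset.sum_filter, Finset.sum_product]
  have hsplitI : ∀ (g : V × V → ℝ),
      (∑ p ∈ P, g p) + (∑ p ∈ B, g p)
        = ∑ v ∈ Wf, ∑ u : V, if dir u v = true then g (u, v) else 0 := by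
    intro g
    have hdisj : Disjoint P B := by
      simp only [hP, hB, Finset.disjoint_left, intP, bIn, Finset.mem_filter]
      tauto
    rw [← Finset.sum_union hdisj]
    have hU : P ∪ B = (Finset.univ ×ˢ Wf).filter (fun p => dir p.1 p.2 = true) := by
      ext p
      simp only [hP, hB, intP, bIn, Finset.mem_union, Finset.mem_filter, Finset.mem_product,
        Finset.mem_univ, true_and]
      tauto
    rw [hU, Finset.sum_filter, Finset.sum_product_right]
  have hcardO : P.card + A.card = 2 * Wf.card := by
    have := hsplitO (fun _ => (1:ℝ))
    simp only [Finset.sum_const, nsmul_eq_mul, mul_one] at this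
    have h2 : ∀ v ∈ Wf, (∑ u : V, if dir v u = true then (1:ℝ) else 0) = 2 := by
      intro v hv
      rw [Finset.sum_boole]
      rw [show Finset.univ.filter (fun u => dir v u = true) = outFin dir v from rfl, hout v hv]
      norm_num
    rw [Finset.sum_congr rfl h2, Finset.sum_const, nsmul_eq_mul, mul_comm] at this
    exact_mod_cast this
  have hcardI : P.card + B.card = Wf.card := by
    have := hsplitI (fun _ => (1:ℝ))
    simp only [Finset.sum_const, nsmul_eq_mul, mul_one] at this
    have h2 : ∀ v ∈ Wf, (∑ u : V, if dir u v = true then (1:ℝ) else 0) = 1 := by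
      intro v hv
      rw [Finset.sum_boole]
      rw [show Finset.univ.filter (fun u => dir u v = true) = inFin dir v from rfl, hin v hv]
      norm_num
    rw [Finset.sum_congr rfl h2, Finset.sum_const, nsmul_eq_mul, mul_one] at this
    exact_mod_cast this
  have hflow : (∑ p ∈ A, f p.1 p.2) = ∑ p ∈ B, f p.1 p.2 := by
    have hO := hsplitO (fun p => f p.1 p.2)
    have hI := hsplitI (fun p => f p.1 p.2)
    simp only at hO hI
    have h := Finset.sum_congr rfl (fun v (_ : v ∈ Wf) => conserv v)
    have := hO.trans (h.trans hI.symm)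
    linarith
  have hAlb : (A.card : ℝ) ≤ ∑ p ∈ A, f p.1 p.2 := by
    have := Finset.card_nsmul_le_sum A (fun p => f p.1 p.2) 1
      (fun p hp => lb p.1 p.2 (hAdir p hp))
    simpa using this
  have hBub : (∑ p ∈ B, f p.1 p.2) ≤ (B.card : ℝ) * (r - 1) := by
    have := Finset.sum_le_card_nsmul B (fun p => f p.1 p.2) (r - 1)
      (fun p hp => ub p.1 p.2 (hBdir p hp))
    simpa [nsmul_eq_mul] using this
  have hB1 : 1 ≤ B.card := by
    by_contra h
    have hB0 : B.card = 0 := by omega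
    have hBe : B = ∅ := Finset.card_eq_zero.mp hB0
    have hA1 : 1 ≤ A.card := by
      have := Finset.card_pos.mpr hne
      omega
    have hz : (∑ p ∈ B, f p.1 p.2) = 0 := by rw [hBe]; simp
    rw [hflow, hz] at hAlb
    have : (1:ℝ) ≤ (A.card : ℝ) := by exact_mod_cast hA1
    linarith
  exact ⟨hcardO, hcardI, hB1, by linarith⟩

end key

lemma cnzf_deg (hG : IsCubic G) (c : CNZF G r) (v : V) :
    (outFin c.dir v).card + (inFin c.dir v).card = 3 := by
  classical
  have hset : G.neighborSet v = ((outFin c.dir v ∪ inFin c.dir v : Finset V) : Set V) := by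
    ext u
    simp only [SimpleGraph.mem_neighborSet, Finset.coe_union, Set.mem_union, Finset.mem_coe,
      outFin, inFin, Finset.mem_filter, Finset.mem_univ, true_and]
    exact c.orients v u
  have h3 := hG v
  rw [hset] at h3
  rw [Nat.card_coe_set_eq, Set.ncard_coe_finset] at h3
  rw [← h3]
  have hdisj : Disjoint (outFin c.dir v) (inFin c.dir v) := by
    simp only [Finset.disjoint_left, outFin, inFin, Finset.mem_filter, Finset.mem_univ, true_and]
    intro u h1 h2
    have := c.asymm v u h1
    rw [this] at h2
    exact Bool.false_ne_true h2
  exact (Finset.card_union_of_disjoint hdisj).symm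

lemma cnzf_out12 (hG : IsCubic G) (c : CNZF G r) (v : V) :
    (outFin c.dir v).card = 1 ∨ (outFin c.dir v).card = 2 := by
  classical
  have hdeg := cnzf_deg hG c v
  have hL : ((outFin c.dir v).card : ℝ) ≤ ∑ u : V, if c.dir v u = true then c.f v u else 0 := by
    rw [← Finset.sum_filter]
    have := Finset.card_nsmul_le_sum (outFin c.dir v) (fun u => c.f v u) 1
      (fun u hu => c.lb v u (by simpa [outFin] using hu))
    simpa [outFin] using this
  have hR : ((inFin c.dir v).card : ℝ) ≤ ∑ u : V, if c.dir u v = true then c.f u v else 0 := by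
    rw [← Finset.sum_filter]
    have := Finset.card_nsmul_le_sum (inFin c.dir v) (fun u => c.f u v) 1
      (fun u hu => c.lb u v (by simpa [inFin] using hu))
    simpa [inFin] using this
  have hcons := c.conserv v
  by_contra h
  push_neg at h
  have h0 : (outFin c.dir v).card = 0 ∨ (outFin c.dir v).card = 3 := by omega
  rcases h0 with h0 | h0
  · have hz : (∑ u : V, if c.dir v u = true then c.f v u else 0) = 0 := by
      rw [← Finset.sum_filter]
      have he : (outFin c.dir v) = ∅ := Finset.card_eq_zero.mp h0
      simp only [outFin] at he
      rw [he]; simp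
    rw [hz] at hcons
    have h3 : (inFin c.dir v).card = 3 := by omega
    rw [h3] at hR
    rw [← hcons] at hR
    norm_num at hR
  · have h3 : (inFin c.dir v).card = 0 := by omega
    have hz : (∑ u : V, if c.dir u v = true then c.f u v else 0) = 0 := by
      rw [← Finset.sum_filter]
      have he : (inFin c.dir v) = ∅ := Finset.card_eq_zero.mp h3
      simp only [inFin] at he
      rw [he]; simp
    rw [hz] at hcons
    rw [h0, hcons] at hL
    norm_num at hL

lemma walk_transfer {S W : Set V}
    (hcl : ∀ z w : ↥S, z.val ∈ W → (G.induce S).Adj z w → w.val ∈ W) :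
    ∀ {x y : ↥S} (_ : (G.induce S).Walk x y) (hx : x.val ∈ W),
      ∃ hy : y.val ∈ W, (G.induce W).Reachable ⟨x.val, hx⟩ ⟨y.val, hy⟩ := by
  intro x y p
  induction p with
  | nil => exact fun hx => ⟨hx, SimpleGraph.Reachable.refl _⟩
  | @cons a b _ h q ih =>
    intro hx
    have h2 : b.val ∈ W := hcl _ _ hx h
    obtain ⟨hy, hr⟩ := ih h2
    refine ⟨hy, SimpleGraph.Reachable.trans (SimpleGraph.Adj.reachable ?_) hr⟩
    simpa [SimpleGraph.comap_adj] using h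

lemma comp_closed {S : Set V} (comp : (G.induce S).ConnectedComponent) :
    ∀ z w : ↥S, z.val ∈ (Subtype.val '' comp.supp) → (G.induce S).Adj z w →
      w.val ∈ (Subtype.val '' comp.supp) := by
  intro z w hz hadj
  obtain ⟨z', hz', hzv⟩ := hz
  have : z' = z := Subtype.ext hzv
  subst this
  refine ⟨w, ?_, rfl⟩
  rw [SimpleGraph.ConnectedComponent.mem_supp_iff] at hz' ⊢
  rw [← hz']
  exact (SimpleGraph.ConnectedComponent.connectedComponentMk_eq_of_adj hadj).symm

lemma comp_connected {S : Set V} (comp : (G.induce S).ConnectedComponent) :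
    (G.induce (Subtype.val '' comp.supp)).Connected := by
  obtain ⟨x0, hx0⟩ := comp.exists_rep
  have hx0W : x0.val ∈ (Subtype.val '' comp.supp) := ⟨x0, hx0, rfl⟩
  have hne : Nonempty ↥(Subtype.val '' comp.supp) := ⟨⟨x0.val, hx0W⟩⟩
  refine { preconnected := ?_, nonempty := hne }
  rintro ⟨u, u', hu', rfl⟩ ⟨w, w', hw', rfl⟩
  rw [SimpleGraph.ConnectedComponent.mem_supp_iff] at hu' hw'
  have hreach : (G.induce S).Reachable u' w' :=
    SimpleGraph.ConnectedComponent.exact (hu'.trans hw'.symm)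
  obtain ⟨p⟩ := hreach
  obtain ⟨hy, hr⟩ := walk_transfer (comp_closed comp) p ⟨u', hu', rfl⟩
  exact hr

lemma tree_count [DecidableEq V] (dir : V → V → Bool)
    (orients : ∀ u v, G.Adj u v ↔ (dir u v = true ∨ dir v u = true))
    (asymm : ∀ u v, dir u v = true → dir v u = false)
    (W : Set V) (Wf : Finset V) (hWf : ∀ v, v ∈ Wf ↔ v ∈ W)
    (ht : (G.induce W).IsTree) :
    (Finset.univ.filter fun p : V × V => dir p.1 p.2 = true ∧ p.1 ∈ Wf ∧ p.2 ∈ Wf).card + 1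
      = Wf.card := by
  classical
  haveI : Fintype ↥W := Fintype.ofFinite _
  haveI : DecidableRel (G.induce W).Adj := Classical.decRel _
  haveI : Fintype (G.induce W).edgeSet := Fintype.ofFinite _
  have h1 := ht.card_edgeFinset
  have hWfeq : W.toFinset = Wf := by
    ext v; rw [Set.mem_toFinset, hWf]
  have hcardW : Fintype.card ↥W = Wf.card := by
    rw [← Set.toFinset_card, hWfeq]
  have h2 := (G.induce W).two_mul_card_edgeFinset
  set F1 := Finset.univ.filter (fun q : ↥W × ↥W => dir q.1.val q.2.val = true) with hF1
  set F2 := Finset.univ.filter (fun q : ↥W × ↥W => dir q.2.val q.1.val = true) with hF2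
  have hadj : ∀ q : ↥W × ↥W, (G.induce W).Adj q.1 q.2 ↔ G.Adj q.1.val q.2.val := by
    intro q; simp [SimpleGraph.comap_adj]
  have hsplit : (Finset.univ.filter fun x : ↥W × ↥W => (G.induce W).Adj x.1 x.2) = F1 ∪ F2 := by
    ext q
    simp only [hF1, hF2, Finset.mem_union, Finset.mem_filter, Finset.mem_univ, true_and]
    rw [hadj q, orients]
  have hdisj : Disjoint F1 F2 := by
    simp only [hF1, hF2, Finset.disjoint_left, Finset.mem_filter, Finset.mem_univ, true_and]
    intro q h1' h2'
    have := asymm _ _ h1'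
    rw [this] at h2'
    exact Bool.false_ne_true h2'
  have hF2card : F2.card = F1.card := by
    apply Finset.card_nbij' (fun q => (q.2, q.1)) (fun q => (q.2, q.1))
    · intro q hq
      simp only [hF2, Finset.mem_coe, Finset.mem_filter, Finset.mem_univ, true_and] at hq
      simp only [hF1, Finset.mem_coe, Finset.mem_filter, Finset.mem_univ, true_and]
      exact hq
    · intro q hq
      simp only [hF1, Finset.mem_coe, Finset.mem_filter, Finset.mem_univ, true_and] at hq
      simp only [hF2, Finset.mem_coe, Finset.mem_filter, Finset.mem_univ, true_and]
      exact hq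
    · intro q _; rfl
    · intro q _; rfl
  have hF1card : F1.card
      = (Finset.univ.filter fun p : V × V =>
          dir p.1 p.2 = true ∧ p.1 ∈ Wf ∧ p.2 ∈ Wf).card := by
    apply Finset.card_bij (fun q _ => (q.1.val, q.2.val))
    · intro q hq
      simp only [hF1, Finset.mem_filter, Finset.mem_univ, true_and] at hq
      simp only [Finset.mem_filter, Finset.mem_univ, true_and]
      exact ⟨hq, (hWf _).mpr q.1.prop, (hWf _).mpr q.2.prop⟩
    · rintro ⟨a1, a2⟩ ha ⟨b1, b2⟩ hb heq
      simp only [Prod.ext_iff] at heq ⊢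
      exact ⟨Subtype.ext heq.1, Subtype.ext heq.2⟩
    · intro p hp
      simp only [Finset.mem_filter, Finset.mem_univ, true_and] at hp
      refine ⟨(⟨p.1, (hWf _).mp hp.2.1⟩, ⟨p.2, (hWf _).mp hp.2.2⟩), ?_, rfl⟩
      simp only [hF1, Finset.mem_filter, Finset.mem_univ, true_and]
      exact hp.1
  rw [hsplit, Finset.card_union_of_disjoint hdisj, hF2card, hF1card] at h2
  rw [hcardW] at h1
  have hcc : ∀ (i1 i2 : Fintype (G.induce W).edgeSet),
      @Finset.card _ (@SimpleGraph.edgeFinset _ _ i1)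
        = @Finset.card _ (@SimpleGraph.edgeFinset _ _ i2) := by
    intro i1 i2
    congr!
  rw [hcc _ (G.induce W).fintypeEdgeSet] at h1
  omega

end EMTaux
end EMTproof
namespace EMTaux
open Finset

variable {V : Type*} [Fintype V] {G : SimpleGraph V} {r : ℝ}

lemma master (hr : 2 ≤ r) (hG : IsCubic G) (c : CNZF G r) :
    MonoOK G (⌊r⌋₊ - 2) {v | (outFin c.dir v).card = 2} := by
  classical
  set S : Set V := {v | (outFin c.dir v).card = 2} with hS
  have hkey : ∀ Wf : Finset V, Wf.Nonempty → (∀ v ∈ Wf, v ∈ S) →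
      (intP c.dir Wf).card + (bOut c.dir Wf).card = 2 * Wf.card ∧
      (intP c.dir Wf).card + (bIn c.dir Wf).card = Wf.card ∧
      1 ≤ (bIn c.dir Wf).card ∧
      ((bOut c.dir Wf).card : ℝ) ≤ ((bIn c.dir Wf).card : ℝ) * (r - 1) := by
    intro Wf hne hmem
    apply key_count c.dir Wf c.f r c.lb c.ub c.conserv hne
    · intro v hv
      exact hmem v hv
    · intro v hv
      have hd := cnzf_deg hG c v
      have h2 : (outFin c.dir v).card = 2 := hmem v hv
      omega
  have hkey' : ∀ Wf : Finset V, Wf.Nonempty → (∀ v ∈ Wf, v ∈ S) →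
      (Finset.univ.filter
        (fun p : V × V => c.dir p.1 p.2 = true ∧ p.1 ∈ Wf ∧ p.2 ∈ Wf)).card + 1 ≤ Wf.card := by
    intro Wf hne hmem
    obtain ⟨-, h2, h3, -⟩ := hkey Wf hne hmem
    have : (intP c.dir Wf).card = (Finset.univ.filter
        (fun p : V × V => c.dir p.1 p.2 = true ∧ p.1 ∈ Wf ∧ p.2 ∈ Wf)).card := rfl
    omega
  have hacyc : (G.induce S).IsAcyclic := by
    intro a p hp
    set L := p.support.tail with hL
    have hnodupL : L.Nodup := hp.support_nodup
    set Wf : Finset V := (L.map Subtype.val).toFinset with hWf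
    have hWfcard : Wf.card = p.length := by
      rw [hWf, List.toFinset_card_of_nodup (hnodupL.map Subtype.val_injective),
        List.length_map, hL, List.length_tail, SimpleGraph.Walk.length_support]
      omega
    have hsupp : ∀ x : ↥S, x ∈ p.support → x.val ∈ Wf := by
      have ha : a ∈ L := by
        cases p with
        | nil => exact absurd rfl hp.ne_nil
        | cons h q => simpa [hL, SimpleGraph.Walk.support_cons] using q.end_mem_support
      intro x hx
      rw [SimpleGraph.Walk.support_eq_cons] at hx
      rw [hWf, List.mem_toFinset, List.mem_map]
      rcases List.mem_cons.mp hx with rfl | hx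
      · exact ⟨x, ha, rfl⟩
      · exact ⟨x, hx, rfl⟩
    have hedn : p.edges.Nodup := hp.isCircuit.isTrail.edges_nodup
    have hdnodup : p.darts.Nodup := List.Nodup.of_map _ hedn
    have hinj : ∀ x ∈ p.darts, ∀ y ∈ p.darts, x.edge = y.edge → x = y :=
      List.inj_on_of_nodup_map hedn
    set i : (G.induce S).Dart → V × V := fun d =>
      if c.dir d.toProd.1.val d.toProd.2.val = true then (d.toProd.1.val, d.toProd.2.val)
      else (d.toProd.2.val, d.toProd.1.val) with hi
    have hmaps : ∀ d ∈ p.darts.toFinset,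
        i d ∈ Finset.univ.filter
          (fun q : V × V => c.dir q.1 q.2 = true ∧ q.1 ∈ Wf ∧ q.2 ∈ Wf) := by
      intro d hd
      rw [List.mem_toFinset] at hd
      have h1 : d.toProd.1.val ∈ Wf := hsupp _ (p.dart_fst_mem_support_of_mem_darts hd)
      have h2 : d.toProd.2.val ∈ Wf := hsupp _ (p.dart_snd_mem_support_of_mem_darts hd)
      have hadj : G.Adj d.toProd.1.val d.toProd.2.val := d.adj
      rw [hi]
      by_cases hdir' : c.dir d.toProd.1.val d.toProd.2.val = true
      · simp only [if_pos hdir']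
        exact Finset.mem_filter.mpr ⟨Finset.mem_univ _, hdir', h1, h2⟩
      · simp only [if_neg hdir']
        rcases (c.orients _ _).mp hadj with hdir | hdir
        · exact absurd hdir hdir'
        · exact Finset.mem_filter.mpr ⟨Finset.mem_univ _, hdir, h2, h1⟩
    have hinjOn : Set.InjOn i p.darts.toFinset := by
      rintro ⟨⟨x1, y1⟩, adj1⟩ h1 ⟨⟨x2, y2⟩, adj2⟩ h2 heq
      rw [Finset.mem_coe, List.mem_toFinset] at h1 h2
      apply hinj _ h1 _ h2
      rw [SimpleGraph.Dart.edge, SimpleGraph.Dart.edge]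
      rw [hi] at heq
      simp only [Prod.ext_iff] at heq
      split_ifs at heq <;>
        simp only at heq <;>
        [exact Sym2.eq_iff.mpr (Or.inl ⟨Subtype.ext heq.1, Subtype.ext heq.2⟩);
         exact Sym2.eq_iff.mpr (Or.inr ⟨Subtype.ext heq.1, Subtype.ext heq.2⟩);
         exact Sym2.eq_iff.mpr (Or.inr ⟨Subtype.ext heq.2, Subtype.ext heq.1⟩);
         exact Sym2.eq_iff.mpr (Or.inl ⟨Subtype.ext heq.2, Subtype.ext heq.1⟩)]
    have hle : p.length ≤ (Finset.univ.filter
        (fun q : V × V => c.dir q.1 q.2 = true ∧ q.1 ∈ Wf ∧ q.2 ∈ Wf)).card := by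
      have := Finset.card_le_card_of_injOn i hmaps hinjOn
      rwa [List.toFinset_card_of_nodup hdnodup, SimpleGraph.Walk.length_darts] at this
    have hlen3 := hp.three_le_length
    have hne : Wf.Nonempty := by
      rw [← Finset.card_pos, hWfcard]; omega
    have := hkey' Wf hne (by
      intro v hv
      rw [hWf, List.mem_toFinset, List.mem_map] at hv
      obtain ⟨x, _, rfl⟩ := hv
      exact x.prop)
    omega
  refine ⟨hacyc, ?_⟩
  intro comp
  set W : Set V := Subtype.val '' comp.supp with hW
  have hWS : W ⊆ S := by rintro v ⟨x, _, rfl⟩; exact x.prop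
  set Wf : Finset V := Finset.univ.filter (· ∈ W) with hWfdef
  have hWf : ∀ v, v ∈ Wf ↔ v ∈ W := by
    intro v; simp [hWfdef]
  have hconn := comp_connected comp
  have hacycW : (G.induce W).IsAcyclic := by
    intro v q hq
    have hinj : Function.Injective (G.induceHomOfLE hWS).toHom :=
      (G.induceHomOfLE hWS).injective
    exact hacyc (q.map (G.induceHomOfLE hWS).toHom)
      ((SimpleGraph.Walk.map_isCycle_iff_of_injective hinj).mpr hq)
  have htree : (G.induce W).IsTree := ⟨hconn, hacycW⟩
  have hcnt := tree_count c.dir c.orients c.asymm W Wf hWf htree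
  obtain ⟨x0, hx0⟩ := comp.exists_rep
  have hx0W : x0.val ∈ W := ⟨x0, hx0, rfl⟩
  have hne : Wf.Nonempty := ⟨x0.val, (hWf _).mpr hx0W⟩
  obtain ⟨h1, h2, h3, h4⟩ := hkey Wf hne (fun v hv => hWS ((hWf v).mp hv))
  have hcnt' : (intP c.dir Wf).card + 1 = Wf.card := hcnt
  have hBcard : (bIn c.dir Wf).card = 1 := by omega
  have hAcard : (bOut c.dir Wf).card = Wf.card + 1 := by omega
  have hreal : (Wf.card : ℝ) + 1 ≤ r - 1 := by
    rw [hAcard, hBcard] at h4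
    push_cast at h4
    linarith
  have hfloor : Wf.card + 2 ≤ ⌊r⌋₊ := by
    apply Nat.le_floor
    push_cast
    linarith
  have hsuppcard : Nat.card comp.supp = Wf.card := by
    haveI : Fintype ↥W := Fintype.ofFinite _
    rw [Nat.card_coe_set_eq]
    have himg : W.ncard = comp.supp.ncard :=
      Set.ncard_image_of_injective _ Subtype.val_injective
    rw [← himg, Set.ncard_eq_toFinset_card']
    congr 1
    ext v
    rw [Set.mem_toFinset, hWf]
  rw [hsuppcard]
  omega

def CNZF.rev (c : CNZF G r) : CNZF G r where
  dir u v := c.dir v u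
  f u v := c.f v u
  orients u v := (c.orients u v).trans or_comm
  asymm u v h := c.asymm v u h
  lb u v h := c.lb v u h
  ub u v h := c.ub v u h
  conserv v := (c.conserv v).symm

end EMTaux
/-- If a cubic graph admits a circular nowhere-zero r-flow, then it admits a
⌊r⌋-weak bisection. -/
theorem stmt0 {V : Type*} [Fintype V] (G : SimpleGraph V) (r : ℝ) (hr : 2 ≤ r)
    (hG : IsCubic G) (c : CNZF G r) :
    ∃ S : Set V, IsWeakBisection G ⌊r⌋₊ S := by
  classical
  open EMTaux in
  refine ⟨{v | (EMTaux.outFin c.dir v).card = 2}, ?_, ?_, ?_⟩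
  · -- cardinality
    set S : Set V := {v | (EMTaux.outFin c.dir v).card = 2} with hS
    have e1 : (Finset.univ.filter fun p : V × V => c.dir p.1 p.2 = true).card
        = ∑ v : V, (EMTaux.outFin c.dir v).card := by
      rw [Finset.card_filter, ← Finset.univ_product_univ, Finset.sum_product]
      exact Finset.sum_congr rfl (fun v _ => by rw [EMTaux.outFin, Finset.card_filter])
    have e2 : (Finset.univ.filter fun p : V × V => c.dir p.1 p.2 = true).card
        = ∑ v : V, (EMTaux.inFin c.dir v).card := by
      rw [Finset.card_filter, ← Finset.univ_product_univ, Finset.sum_product_right]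
      exact Finset.sum_congr rfl (fun v _ => by rw [EMTaux.inFin, Finset.card_filter])
    set Sf : Finset V := Finset.univ.filter (fun v => (EMTaux.outFin c.dir v).card = 2) with hSf
    set Tf : Finset V := Finset.univ.filter
      (fun v => ¬ (EMTaux.outFin c.dir v).card = 2) with hTf
    have hsplit : ∀ g : V → ℕ, (∑ v ∈ Sf, g v) + (∑ v ∈ Tf, g v) = ∑ v : V, g v := by
      intro g
      rw [hSf, hTf]
      exact Finset.sum_filter_add_sum_filter_not _ _ _
    have houtS : ∀ v ∈ Sf, (EMTaux.outFin c.dir v).card = 2 := by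
      intro v hv; rw [hSf, Finset.mem_filter] at hv; exact hv.2
    have houtT : ∀ v ∈ Tf, (EMTaux.outFin c.dir v).card = 1 := by
      intro v hv; rw [hTf, Finset.mem_filter] at hv
      rcases EMTaux.cnzf_out12 hG c v with h | h
      · exact h
      · exact absurd h hv.2
    have hinS : ∀ v ∈ Sf, (EMTaux.inFin c.dir v).card = 1 := by
      intro v hv
      have := EMTaux.cnzf_deg hG c v
      have := houtS v hv
      omega
    have hinT : ∀ v ∈ Tf, (EMTaux.inFin c.dir v).card = 2 := by
      intro v hv
      have := EMTaux.cnzf_deg hG c v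
      have := houtT v hv
      omega
    have hsum1 : ∑ v : V, (EMTaux.outFin c.dir v).card = 2 * Sf.card + Tf.card := by
      rw [← hsplit, Finset.sum_congr rfl houtS, Finset.sum_congr rfl houtT]
      simp [mul_comm]
    have hsum2 : ∑ v : V, (EMTaux.inFin c.dir v).card = Sf.card + 2 * Tf.card := by
      rw [← hsplit, Finset.sum_congr rfl hinS, Finset.sum_congr rfl hinT]
      simp [mul_comm]
    have hab : Sf.card = Tf.card := by
      have := e1.symm.trans e2
      omega
    haveI : Fintype ↥S := Fintype.ofFinite _
    haveI : Fintype ↥(Sᶜ : Set V) := Fintype.ofFinite _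
    have hcS : Nat.card S = Sf.card := by
      rw [Nat.card_coe_set_eq, Set.ncard_eq_toFinset_card']
      congr 1
      ext v
      simp [hS, hSf]
    have hcT : Nat.card (Sᶜ : Set V) = Tf.card := by
      rw [Nat.card_coe_set_eq, Set.ncard_eq_toFinset_card']
      congr 1
      ext v
      simp [hS, hTf]
    rw [hcS, hcT, hab]
  · exact EMTaux.master hr hG c
  · have hSc : {v | (EMTaux.outFin (EMTaux.CNZF.rev c).dir v).card = 2}
        = ({v | (EMTaux.outFin c.dir v).card = 2}ᶜ : Set V) := by
      ext v
      have hrevfin : EMTaux.outFin (EMTaux.CNZF.rev c).dir v = EMTaux.inFin c.dir v := rfl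
      have hd := EMTaux.cnzf_deg hG c v
      have h12 := EMTaux.cnzf_out12 hG c v
      simp only [Set.mem_setOf_eq, Set.mem_compl_iff, hrevfin]
      constructor
      · intro h; omega
      · intro h; omega
    rw [← hSc]
    exact EMTaux.master hr hG (EMTaux.CNZF.rev c)
end

section
/- Let G be a cubic graph with an orientation D admitting a circular nowhere-zero r-flow, and let V₁ (resp. V₂) be the set of vertices of out-degree 1 (resp. 2) in D. If the subgraph of G induced by V₁ contains a path on three vertices, then r ≥ 5. -/
open SimpleGraph

/-!
At a vertex of out-degree 1 of a cubic graph there are exactly two incoming edges, so flow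
conservation makes the outgoing flow the sum of the two incoming ones: it is at least 2 and
exceeds each incoming flow by at least 1. On the path x y z of out-degree-1 vertices, y cannot
point to both x and z. Hence either two of the edges form a directed path, and the outgoing flows
along it are at least 2, 3, 4, or x and z both point into y, whose outgoing flow is then at
least 2 + 2. In both cases r - 1 ≥ 4.
-/

namespace CNZF

variable {V : Type*} [Fintype V] {G : SimpleGraph V} {r : ℝ} (c : CNZF G r)

def outNbrs (v : V) : Finset V := Finset.univ.filter (c.dir v · = true)

def inNbrs (v : V) : Finset V := Finset.univ.filter (c.dir · v = true)

variable {c}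

@[simp] lemma mem_outNbrs {v u : V} : u ∈ c.outNbrs v ↔ c.dir v u = true := by
  simp [outNbrs]

@[simp] lemma mem_inNbrs {v u : V} : u ∈ c.inNbrs v ↔ c.dir u v = true := by
  simp [inNbrs]

lemma card_outNbrs (v : V) : (c.outNbrs v).card = outDeg c.dir v := by
  rw [outDeg, Nat.card_eq_card_toFinset]
  congr 1
  ext u
  simp

lemma card_outNbrs_add_card_inNbrs (hG : IsCubic G) (v : V) :
    (c.outNbrs v).card + (c.inNbrs v).card = 3 := by
  classical
  have hdisj : Disjoint (c.outNbrs v) (c.inNbrs v) :=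
    Finset.disjoint_left.mpr fun u hout hin => by
      simp only [mem_outNbrs, mem_inNbrs] at hout hin
      simp [c.asymm v u hout] at hin
  rw [← Finset.card_union_of_disjoint hdisj, ← hG v, Nat.card_eq_card_toFinset]
  congr 1
  ext u
  simp [c.orients]

lemma sum_f_outNbrs_eq_sum_f_inNbrs (v : V) :
    ∑ u ∈ c.outNbrs v, c.f v u = ∑ u ∈ c.inNbrs v, c.f u v := by
  simpa only [outNbrs, inNbrs, Finset.sum_filter] using c.conserv v

lemma outNbrs_eq_singleton {v w : V} (hv : outDeg c.dir v = 1) (hw : c.dir v w = true) :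
    c.outNbrs v = {w} := by
  obtain ⟨w', hw'⟩ := Finset.card_eq_one.mp ((card_outNbrs v).trans hv)
  have : w ∈ c.outNbrs v := mem_outNbrs.mpr hw
  rw [hw', Finset.mem_singleton] at this
  rw [hw', this]

lemma eq_of_dir_of_outDeg_eq_one {v a b : V} (hv : outDeg c.dir v = 1)
    (ha : c.dir v a = true) (hb : c.dir v b = true) : a = b := by
  simpa [outNbrs_eq_singleton hv hb] using mem_outNbrs.mpr ha

lemma exists_dir_of_outDeg_eq_one {v : V} (hv : outDeg c.dir v = 1) : ∃ w, c.dir v w = true := by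
  obtain ⟨w, hw⟩ := Finset.card_pos.mp (((card_outNbrs v).trans hv).symm ▸ Nat.one_pos)
  exact ⟨w, mem_outNbrs.mp hw⟩

lemma card_inNbrs_of_outDeg_eq_one (hG : IsCubic G) {v : V} (hv : outDeg c.dir v = 1) :
    (c.inNbrs v).card = 2 := by
  have := card_outNbrs_add_card_inNbrs (c := c) hG v
  rw [card_outNbrs, hv] at this
  omega

lemma f_eq_add_of_outDeg_eq_one (hG : IsCubic G) {v w a b : V} (hv : outDeg c.dir v = 1)
    (hw : c.dir v w = true) (ha : c.dir a v = true) (hb : c.dir b v = true) (hab : a ≠ b) :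
    c.f v w = c.f a v + c.f b v := by
  classical
  have hin : c.inNbrs v = {a, b} :=
    (Finset.eq_of_subset_of_card_le
      (Finset.insert_subset_iff.mpr ⟨mem_inNbrs.mpr ha,
        Finset.singleton_subset_iff.mpr (mem_inNbrs.mpr hb)⟩)
      (by rw [card_inNbrs_of_outDeg_eq_one hG hv, Finset.card_pair hab])).symm
  simpa [outNbrs_eq_singleton hv hw, hin, Finset.sum_pair hab] using
    sum_f_outNbrs_eq_sum_f_inNbrs (c := c) v

lemma f_add_one_le_of_outDeg_eq_one (hG : IsCubic G) {u v w : V} (hv : outDeg c.dir v = 1)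
    (hu : c.dir u v = true) (hw : c.dir v w = true) : c.f u v + 1 ≤ c.f v w := by
  obtain ⟨u', hu'_mem, hne⟩ := Finset.exists_mem_ne
    (by rw [card_inNbrs_of_outDeg_eq_one hG hv]; norm_num : 1 < (c.inNbrs v).card) u
  have hu' := mem_inNbrs.mp hu'_mem
  rw [f_eq_add_of_outDeg_eq_one hG hv hw hu hu' hne.symm]
  linarith [c.lb u' v hu']

lemma two_le_f_of_outDeg_eq_one (hG : IsCubic G) {v w : V} (hv : outDeg c.dir v = 1)
    (hw : c.dir v w = true) : 2 ≤ c.f v w := by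
  obtain ⟨u, hu_mem⟩ := Finset.card_pos.mp
    ((card_inNbrs_of_outDeg_eq_one hG hv).symm ▸ Nat.two_pos : 0 < (c.inNbrs v).card)
  have hu := mem_inNbrs.mp hu_mem
  linarith [c.lb u v hu, f_add_one_le_of_outDeg_eq_one hG hv hu hw]

lemma four_le_f_of_dir_path (hG : IsCubic G) {x y z w : V} (hx : outDeg c.dir x = 1)
    (hy : outDeg c.dir y = 1) (hz : outDeg c.dir z = 1) (hxy : c.dir x y = true)
    (hyz : c.dir y z = true) (hzw : c.dir z w = true) : 4 ≤ c.f z w := by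
  linarith [two_le_f_of_outDeg_eq_one hG hx hxy, f_add_one_le_of_outDeg_eq_one hG hy hxy hyz,
    f_add_one_le_of_outDeg_eq_one hG hz hyz hzw]

lemma four_le_f_of_two_dir_in (hG : IsCubic G) {x y z w : V} (hx : outDeg c.dir x = 1)
    (hy : outDeg c.dir y = 1) (hz : outDeg c.dir z = 1) (hxy : c.dir x y = true)
    (hzy : c.dir z y = true) (hxz : x ≠ z) (hyw : c.dir y w = true) : 4 ≤ c.f y w := by
  linarith [two_le_f_of_outDeg_eq_one hG hx hxy, two_le_f_of_outDeg_eq_one hG hz hzy,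
    f_eq_add_of_outDeg_eq_one hG hy hyw hxy hzy hxz]

end CNZF

/-- If the vertices of out-degree 1 of an orientation with a circular
nowhere-zero r-flow induce a path on three vertices, then r ≥ 5. -/
theorem stmt1 {V : Type*} [Fintype V] (G : SimpleGraph V) (r : ℝ)
    (hG : IsCubic G) (c : CNZF G r) (x y z : V)
    (hx : outDeg c.dir x = 1) (hy : outDeg c.dir y = 1) (hz : outDeg c.dir z = 1)
    (hxy : G.Adj x y) (hyz : G.Adj y z) (hxz : x ≠ z) :
    5 ≤ r := by
  suffices ∃ u w, c.dir u w = true ∧ 4 ≤ c.f u w by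
    obtain ⟨u, w, huw, hf⟩ := this
    linarith [c.ub u w huw]
  rcases (c.orients x y).mp hxy with hxy | hyx <;> rcases (c.orients y z).mp hyz with hyz | hzy
  · obtain ⟨w, hzw⟩ := CNZF.exists_dir_of_outDeg_eq_one hz
    exact ⟨z, w, hzw, CNZF.four_le_f_of_dir_path hG hx hy hz hxy hyz hzw⟩
  · obtain ⟨w, hyw⟩ := CNZF.exists_dir_of_outDeg_eq_one hy
    exact ⟨y, w, hyw, CNZF.four_le_f_of_two_dir_in hG hx hy hz hxy hzy hxz hyw⟩
  · exact absurd (CNZF.eq_of_dir_of_outDeg_eq_one hy hyx hyz) hxz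
  · obtain ⟨w, hxw⟩ := CNZF.exists_dir_of_outDeg_eq_one hx
    exact ⟨x, w, hxw, CNZF.four_le_f_of_dir_path hG hz hy hx hzy hyx hxw⟩
end

section
/- Let G be a cubic graph with an orientation D admitting a circular nowhere-zero r-flow for some real r ≥ 2, and let V₁ be the set of vertices of out-degree 1 in D. Then the subgraph of G induced by V₁ contains no cycle. -/
open SimpleGraph

/-!
Along an edge `u → v` between two vertices of out-degree 1, the outflow strictly increases:
the outflow of `u` is the value `f(u, v)` on its only outgoing edge, while `v`, having two
incoming edges, receives more than `f(u, v)` and sends out as much as it receives. On a cycle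
of such vertices, a vertex of least outflow must therefore send flow to both of its neighbours
on the cycle, contradicting out-degree 1.
-/

namespace SimpleGraph

theorem isAcyclic_of_orientation_strictMono {V α : Type*} [LinearOrder α] {H : SimpleGraph V}
    (R : V → V → Prop) (φ : V → α) (horient : ∀ u v, H.Adj u v → R u v ∨ R v u)
    (hmono : ∀ u v, R u v → φ u < φ v) (hout : ∀ u v w, R u v → R u w → v = w) :
    H.IsAcyclic := by
  classical
  intro v p hp
  obtain ⟨m, hm, hmin⟩ :=
    p.support.toFinset.exists_min_image φ ⟨v, List.mem_toFinset.mpr p.start_mem_support⟩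
  rw [List.mem_toFinset] at hm
  obtain ⟨b, d, hbd, hnbrs⟩ := Set.ncard_eq_two.mp (hp.ncard_neighborSet_toSubgraph_eq_two hm)
  have hR : ∀ x, p.toSubgraph.Adj m x → R m x := fun x hx =>
    (horient m x hx.adj_sub).resolve_right fun hxm =>
      (hmono x m hxm).not_ge (hmin x (List.mem_toFinset.mpr
        (p.mem_verts_toSubgraph.mp hx.snd_mem)))
  have hb : p.toSubgraph.Adj m b := show b ∈ p.toSubgraph.neighborSet m by simp [hnbrs]
  have hd : p.toSubgraph.Adj m d := show d ∈ p.toSubgraph.neighborSet m by simp [hnbrs]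
  exact hbd (hout m b d (hR b hb) (hR d hd))

end SimpleGraph

namespace CNZF

variable {V : Type*} [Fintype V] {G : SimpleGraph V} {r : ℝ} (c : CNZF G r) {u v w : V}

noncomputable def outFlow (v : V) : ℝ :=
  ∑ u : V, if c.dir v u = true then c.f v u else 0

noncomputable def inFlow (v : V) : ℝ :=
  ∑ u : V, if c.dir u v = true then c.f u v else 0

theorem outFlow_eq_inFlow (v : V) : c.outFlow v = c.inFlow v :=
  c.conserv v

theorem eq_of_dir_of_outDeg_eq_one_s2 (hu : outDeg c.dir u = 1) (hv : c.dir u v = true)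
    (hw : c.dir u w = true) : v = w := by
  have : Subsingleton {x | c.dir u x = true} := (Nat.card_eq_one_iff_unique.mp hu).1
  exact congrArg Subtype.val (Subsingleton.elim (⟨v, hv⟩ : {x | c.dir u x = true}) ⟨w, hw⟩)

theorem outFlow_eq_of_outDeg_eq_one (hu : outDeg c.dir u = 1) (huv : c.dir u v = true) :
    c.outFlow u = c.f u v := by
  rw [outFlow, Finset.sum_eq_single v, if_pos huv]
  · exact fun w _ hwv => if_neg fun huw => hwv (c.eq_of_dir_of_outDeg_eq_one_s2 hu huw huv)
  · exact fun hv => absurd (Finset.mem_univ v) hv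

theorem exists_ne_dir_of_outDeg_eq_one (hG : IsCubic G) (hv : outDeg c.dir v = 1) (u : V) :
    ∃ w ≠ u, c.dir w v = true := by
  by_contra! hin
  have hsub : G.neighborSet v ⊆ {x | c.dir v x = true} ∪ {u} := by
    intro x hx
    rcases (c.orients v x).mp hx with hvx | hxv
    · exact Or.inl hvx
    · exact Or.inr (by_contra fun hxu => absurd hxv (by simp [hin x hxu]))
  have h3 : (G.neighborSet v).ncard = 3 := by rw [← Nat.card_coe_set_eq]; exact hG v
  have h1 : {x | c.dir v x = true}.ncard = 1 := by rw [← Nat.card_coe_set_eq]; exact hv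
  have := (Set.ncard_le_ncard hsub).trans (Set.ncard_union_le _ _)
  rw [h3, h1, Set.ncard_singleton] at this
  omega

theorem outFlow_lt_of_dir (hG : IsCubic G) (hu : outDeg c.dir u = 1)
    (hv : outDeg c.dir v = 1) (huv : c.dir u v = true) : c.outFlow u < c.outFlow v := by
  classical
  obtain ⟨w, hwu, hwv⟩ := c.exists_ne_dir_of_outDeg_eq_one hG hv u
  have hpair : c.f u v + c.f w v ≤ c.inFlow v := by
    calc c.f u v + c.f w v
        = ∑ x ∈ {u, w}, if c.dir x v = true then c.f x v else 0 := by
          rw [Finset.sum_pair hwu.symm, if_pos huv, if_pos hwv]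
      _ ≤ c.inFlow v := by
          refine Finset.sum_le_sum_of_subset_of_nonneg (Finset.subset_univ _) fun x _ _ => ?_
          split_ifs with hxv
          · exact zero_le_one.trans (c.lb x v hxv)
          · exact le_rfl
  rw [c.outFlow_eq_of_outDeg_eq_one hu huv, c.outFlow_eq_inFlow]
  linarith [c.lb w v hwv]

end CNZF

theorem stmt2_general {V : Type*} [Fintype V] (G : SimpleGraph V) (r : ℝ)
    (hG : IsCubic G) (c : CNZF G r) :
    (G.induce {v | outDeg c.dir v = 1}).IsAcyclic :=
  isAcyclic_of_orientation_strictMono (fun u v => c.dir u v = true) (fun v => c.outFlow v)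
    (fun u v huv => (c.orients u v).mp huv)
    (fun u v huv => c.outFlow_lt_of_dir hG u.2 v.2 huv)
    (fun u _ _ hv hw => Subtype.ext (c.eq_of_dir_of_outDeg_eq_one_s2 u.2 hv hw))

/-- The set of vertices of out-degree 1 in an orientation with a circular
nowhere-zero r-flow induces a forest. -/
theorem stmt2 {V : Type*} [Fintype V] (G : SimpleGraph V) (r : ℝ) (hr : 2 ≤ r)
    (hG : IsCubic G) (c : CNZF G r) :
    (G.induce {v | outDeg c.dir v = 1}).IsAcyclic :=
  stmt2_general G r hG c
end

section
/- For every k ≥ 0, in the graph L_k, every 2-coloring of the vertices in which no monochromatic connected component has more than 2 vertices is balanced (both color classes have equal size), and the two vertices of degree 2 receive distinct colors. -/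
open SimpleGraph

/-!
A coloring whose monochromatic components have at most two vertices has no monochromatic path
on three vertices. In `K_{3,3}` minus an edge this forces the two sides `{0, 1, 4}` and
`{2, 3, 5}` to be monochromatic in opposite colors, so the first pair of degree-2 vertices
`4, 5` gets distinct colors. If a rung `a b` of the ladder has distinct colors, so does the next
rung `u v` (with `u ∼ a`, `v ∼ b`): a common color of `u` and `v` is the color of `a` or of `b`,
which closes a monochromatic path `a u v` or `b v u`. Hence `0 ↔ 2`, `1 ↔ 3` and the rungs
`4 + 2j ↔ 5 + 2j` form a color-reversing involution, and the coloring is balanced.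
-/

def NoMonoPath3 {V : Type*} (G : SimpleGraph V) (c : V → Bool) : Prop :=
  ∀ ⦃u v w : V⦄, G.Adj u v → G.Adj v w → u ≠ w → c u = c v → c v ≠ c w

theorem MonoAtMost.noMonoPath3 {V : Type*} [Finite V] {G : SimpleGraph V} {c : V → Bool}
    (hc : MonoAtMost G c 2) : NoMonoPath3 G c := by
  intro u v w huv hvw huw hcuv hcvw
  set S : Set V := {x | c x = c v}
  let u' : S := ⟨u, hcuv⟩
  let v' : S := ⟨v, rfl⟩
  let w' : S := ⟨w, hcvw.symm⟩
  have huv' : (G.induce S).Adj u' v' := huv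
  have hvw' : (G.induce S).Adj v' w' := hvw
  set C := (G.induce S).connectedComponentMk v'
  have hsub : ({u', v', w'} : Set S) ⊆ C.supp := by
    rintro x (rfl | rfl | rfl)
    · exact ConnectedComponent.sound huv'.reachable
    · rfl
    · exact ConnectedComponent.sound hvw'.symm.reachable
  have hthree : ({u', v', w'} : Set S).ncard = 3 :=
    Set.ncard_eq_three.mpr ⟨u', v', w', fun h => huv.ne congr($h.1),
      fun h => huw congr($h.1), fun h => hvw.ne congr($h.1), rfl⟩
  have hle := hc (c v) C
  rw [Nat.card_coe_set_eq] at hle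
  have := Set.ncard_le_ncard hsub (Set.toFinite _)
  omega

theorem card_true_eq_card_false_of_involutive {V : Type*} {c : V → Bool} {f : V → V}
    (hf : Function.Involutive f) (hfc : ∀ v, c (f v) = !c v) :
    Nat.card {v | c v = true} = Nat.card {v | c v = false} :=
  Nat.card_congr <| (hf.toPerm f).subtypeEquiv fun v => by simp [hfc]

section LEdge

variable {k a b : ℕ}

theorem LEdge.ne_and_lt (h : LEdge k a b) : a ≠ b ∧ a < 6 + 2 * k ∧ b < 6 + 2 * k := by
  rcases h with h | ⟨j, h1, hj, h | h | h⟩ <;> simp only [Set.mem_insert_iff,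
    Set.mem_singleton_iff, Prod.mk.injEq] at h <;> omega

theorem LEdge.fromRel_adj (h : LEdge k a b) : (fromRel (LEdge k)).Adj a b :=
  (SimpleGraph.fromRel_adj _ _ _).mpr ⟨h.ne_and_lt.1, Or.inl h⟩

theorem LEdge.lgraph_adj (h : LEdge k a b) :
    (Lgraph k).Adj ⟨a, h.ne_and_lt.2.1⟩ ⟨b, h.ne_and_lt.2.2⟩ :=
  (SimpleGraph.fromRel_adj _ _ _).mpr ⟨fun e => h.ne_and_lt.1 congr($e.1), Or.inl h⟩

end LEdge

/-- Junk value `false` from `n` on. -/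
def extendColor {n : ℕ} (c : Fin n → Bool) (i : ℕ) : Bool :=
  if h : i < n then c ⟨i, h⟩ else false

theorem extendColor_of_lt {n i : ℕ} (c : Fin n → Bool) (h : i < n) :
    extendColor c i = c ⟨i, h⟩ :=
  dif_pos h

theorem NoMonoPath3.extendColor {k : ℕ} {c : Fin (6 + 2 * k) → Bool}
    (hc : NoMonoPath3 (Lgraph k) c) : NoMonoPath3 (fromRel (LEdge k)) (extendColor c) := by
  have lift : ∀ {a b}, (fromRel (LEdge k)).Adj a b →
      ∃ (ha : a < 6 + 2 * k) (hb : b < 6 + 2 * k), (Lgraph k).Adj ⟨a, ha⟩ ⟨b, hb⟩ := by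
    intro a b hab
    rcases ((fromRel_adj _ _ _).mp hab).2 with h | h
    · exact ⟨_, _, h.lgraph_adj⟩
    · exact ⟨_, _, h.lgraph_adj.symm⟩
  intro u v w huv hvw huw
  obtain ⟨hu, hv, hUV⟩ := lift huv
  obtain ⟨_, hw, hVW⟩ := lift hvw
  simp only [extendColor_of_lt c hu, extendColor_of_lt c hv, extendColor_of_lt c hw]
  exact hc hUV hVW fun e => huw congr($e.1)

section Coloring

variable {k : ℕ} {col : ℕ → Bool} (hP : NoMonoPath3 (fromRel (LEdge k)) col)
include hP

theorem NoMonoPath3.base_colors :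
    col 1 = col 0 ∧ col 4 = col 0 ∧ col 2 = !col 0 ∧ col 3 = !col 0 ∧ col 5 = !col 0 := by
  obtain ⟨e02, e03, e05, e12, e13, e15, e42, e43⟩ :
      (fromRel (LEdge k)).Adj 0 2 ∧ (fromRel (LEdge k)).Adj 0 3 ∧ (fromRel (LEdge k)).Adj 0 5 ∧
      (fromRel (LEdge k)).Adj 1 2 ∧ (fromRel (LEdge k)).Adj 1 3 ∧ (fromRel (LEdge k)).Adj 1 5 ∧
      (fromRel (LEdge k)).Adj 4 2 ∧ (fromRel (LEdge k)).Adj 4 3 := by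
    refine ⟨?_, ?_, ?_, ?_, ?_, ?_, ?_, ?_⟩ <;> exact LEdge.fromRel_adj (Or.inl (by simp))
  have p203 := hP e02.symm e03 (by decide)
  have p205 := hP e02.symm e05 (by decide)
  have p305 := hP e03.symm e05 (by decide)
  have p213 := hP e12.symm e13 (by decide)
  have p215 := hP e12.symm e15 (by decide)
  have p315 := hP e13.symm e15 (by decide)
  have p021 := hP e02 e12.symm (by decide)
  have p031 := hP e03 e13.symm (by decide)
  have p051 := hP e05 e15.symm (by decide)
  have p243 := hP e42.symm e43 (by decide)
  revert p203 p205 p305 p213 p215 p315 p021 p031 p051 p243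
  generalize col 0 = x0, col 1 = x1, col 2 = x2, col 3 = x3, col 4 = x4, col 5 = x5
  revert x0 x1 x2 x3 x4 x5
  simp only [Bool.forall_bool]
  simp

theorem NoMonoPath3.rung_colors_ne (j : ℕ) (hj : j ≤ k) : col (4 + 2 * j) ≠ col (5 + 2 * j) := by
  induction j with
  | zero =>
    obtain ⟨-, h4, -, -, h5⟩ := hP.base_colors
    simp [h4, h5]
  | succ j ih =>
    have hprev := ih (by omega)
    have rung : (fromRel (LEdge k)).Adj (4 + 2 * (j + 1)) (5 + 2 * (j + 1)) :=
      LEdge.fromRel_adj (Or.inr ⟨j + 1, by omega, hj, Or.inl rfl⟩)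
    have leg₄ : (fromRel (LEdge k)).Adj (4 + 2 * j) (4 + 2 * (j + 1)) :=
      LEdge.fromRel_adj (Or.inr ⟨j + 1, by omega, hj, Or.inr (Or.inl (by ring_nf))⟩)
    have leg₅ : (fromRel (LEdge k)).Adj (5 + 2 * j) (5 + 2 * (j + 1)) :=
      LEdge.fromRel_adj (Or.inr ⟨j + 1, by omega, hj, Or.inr (Or.inr (by ring_nf))⟩)
    have h₄ := hP leg₄ rung (by omega)
    have h₅ := hP leg₅ rung.symm (by omega)
    revert hprev h₄ h₅
    generalize col (4 + 2 * j) = a, col (5 + 2 * j) = b,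
      col (4 + 2 * (j + 1)) = x, col (5 + 2 * (j + 1)) = y
    revert a b x y
    decide

end Coloring

/-- The color-reversing pairing `0 ↔ 2`, `1 ↔ 3`, `4 + 2j ↔ 5 + 2j` of the vertices of `L_k`. -/
def LPartner (n : ℕ) : ℕ :=
  if n < 4 then (n + 2) % 4 else if n % 2 = 0 then n + 1 else n - 1

theorem LPartner_involutive : Function.Involutive LPartner := by
  intro n
  unfold LPartner
  split_ifs <;> omega

theorem LPartner_lt {k n : ℕ} (h : n < 6 + 2 * k) : LPartner n < 6 + 2 * k := by
  unfold LPartner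
  split_ifs <;> omega

theorem NoMonoPath3.color_LPartner {k n : ℕ} {col : ℕ → Bool}
    (hP : NoMonoPath3 (fromRel (LEdge k)) col) (hn : n < 6 + 2 * k) :
    col (LPartner n) = !col n := by
  obtain ⟨h1, -, h2, h3, -⟩ := hP.base_colors
  by_cases hsmall : n < 4
  · interval_cases n <;> simp [LPartner, h1, h2, h3]
  obtain ⟨j, rfl | rfl⟩ : ∃ j, n = 4 + 2 * j ∨ n = 5 + 2 * j := ⟨(n - 4) / 2, by omega⟩
  · rw [show LPartner (4 + 2 * j) = 5 + 2 * j by unfold LPartner; split_ifs <;> omega]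
    exact Bool.eq_not_iff.mpr (hP.rung_colors_ne j (by omega)).symm
  · rw [show LPartner (5 + 2 * j) = 4 + 2 * j by unfold LPartner; split_ifs <;> omega]
    exact Bool.eq_not_iff.mpr (hP.rung_colors_ne j (by omega))

/-- Every 2-coloring of L_k with no monochromatic component on more than 2
vertices is balanced, and the two degree-2 vertices (4+2k and 5+2k) get
distinct colors. -/
theorem stmt4 (k : ℕ) (c : Fin (6+2*k) → Bool)
    (hc : MonoAtMost (Lgraph k) c 2) :
    Nat.card {v | c v = true} = Nat.card {v | c v = false} ∧
      c ⟨4+2*k, by omega⟩ ≠ c ⟨5+2*k, by omega⟩ := by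
  have hP := hc.noMonoPath3.extendColor
  refine ⟨card_true_eq_card_false_of_involutive (f := fun v => ⟨LPartner v, LPartner_lt v.2⟩)
    (fun v => Fin.ext (LPartner_involutive v)) fun v => ?_, ?_⟩
  · simpa only [extendColor_of_lt c v.2, extendColor_of_lt c (LPartner_lt v.2)]
      using hP.color_LPartner v.2
  · simpa only [extendColor_of_lt c (show 4 + 2 * k < 6 + 2 * k by omega),
      extendColor_of_lt c (show 5 + 2 * k < 6 + 2 * k by omega)] using hP.rung_colors_ne k le_rfl
end

section
/- For every k ≥ 0, the cubic graph T_k admits no 4-weak bisection. -/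
open SimpleGraph

/-!
A colouring whose monochromatic components have at most two vertices has no monochromatic path
on three vertices. For such a colouring of `L_k`, exactly half of the vertices are `true` and the
two degree-2 vertices get different colours: for `L₀` this is a finite check, and each new rung
`u v` is bichromatic because `u` and `v` are joined to the two differently coloured ends of
`L_{k-1}`. In `T_k` every apex is therefore adjacent to a vertex of its own colour, so the centre
differs in colour from all three apexes. If the centre has value `t ∈ {0, 1}`, the number of
`true` vertices is `(3 + k) + 3 + 3 + 3 (1 - t) + t = 12 + k - 2t`, never `11 + k`.
-/

open Finset

theorem Bool.eq_or_eq_of_ne {a b : Bool} (h : a ≠ b) (c : Bool) : c = a ∨ c = b := by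
  cases a <;> cases b <;> cases c <;> simp_all

namespace SimpleGraph

variable {V W : Type*}

def NoMonoP3 (G : SimpleGraph V) (c : V → Bool) : Prop :=
  ∀ ⦃a b d⦄, G.Adj a b → G.Adj b d → a ≠ d → c a = c b → c b ≠ c d

theorem noMonoP3_of_monoAtMost [Finite V] {G : SimpleGraph V} {c : V → Bool}
    (h : MonoAtMost G c 2) : G.NoMonoP3 c := by
  intro a b d hab hbd had hcab hcbd
  let S : Set V := {v | c v = c b}
  let a' : S := ⟨a, hcab⟩
  let b' : S := ⟨b, rfl⟩
  let d' : S := ⟨d, hcbd.symm⟩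
  have hab' : (G.induce S).Adj a' b' := hab
  have hbd' : (G.induce S).Adj b' d' := hbd
  let C := (G.induce S).connectedComponentMk b'
  have hsub : ({a', b', d'} : Set S) ⊆ C.supp := by
    rintro x (rfl | rfl | rfl)
    · exact ConnectedComponent.sound hab'.reachable
    · rfl
    · exact ConnectedComponent.sound hbd'.symm.reachable
  have hthree : ({a', b', d'} : Set S).ncard = 3 :=
    Set.ncard_eq_three.2 ⟨a', b', d', fun h => hab.ne congr($h.1), fun h => had congr($h.1),
      fun h => hbd.ne congr($h.1), rfl⟩
  have hle := h (c b) C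
  rw [Nat.card_coe_set_eq] at hle
  have := Set.ncard_le_ncard hsub (Set.toFinite _)
  omega

theorem NoMonoP3.comap {G : SimpleGraph W} {G' : SimpleGraph V} {c : W → Bool} {f : V → W}
    (h : G.NoMonoP3 c) (hf : Function.Injective f) (hle : G' ≤ G.comap f) :
    G'.NoMonoP3 (c ∘ f) :=
  fun _ _ _ hab hbd had => h (hle hab) (hle hbd) (hf.ne had)

theorem NoMonoP3.of_comap {G : SimpleGraph W} {c : W → Bool} {f : V → W}
    (h : (G.comap f).NoMonoP3 (c ∘ f)) (hG : G.support ⊆ Set.range f) : G.NoMonoP3 c := by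
  intro a b d hab hbd had
  obtain ⟨a, rfl⟩ := hG ⟨b, hab⟩
  obtain ⟨b, rfl⟩ := hG ⟨d, hbd⟩
  obtain ⟨d, rfl⟩ := hG ⟨f b, hbd.symm⟩
  exact h hab hbd (ne_of_apply_ne f had)

theorem NoMonoP3.ne_of_neighbors_ne {G : SimpleGraph V} {c : V → Bool} {z w x y : V}
    (h : G.NoMonoP3 c) (hzw : G.Adj z w) (hwx : G.Adj w x) (hwy : G.Adj w y)
    (hzx : z ≠ x) (hzy : z ≠ y) (hxy : c x ≠ c y) : c z ≠ c w := by
  intro hczw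
  rcases Bool.eq_or_eq_of_ne hxy (c w) with hcw | hcw
  exacts [h hzw hwx hzx hczw hcw, h hzw hwy hzy hczw hcw]

theorem NoMonoP3.ne_of_path_ends_ne {G : SimpleGraph V} {c : V → Bool} {x u v y : V}
    (h : G.NoMonoP3 c) (hxu : G.Adj x u) (huv : G.Adj u v) (hvy : G.Adj v y)
    (hxv : x ≠ v) (huy : u ≠ y) (hxy : c x ≠ c y) : c u ≠ c v := by
  intro hcuv
  rcases Bool.eq_or_eq_of_ne hxy (c u) with hcu | hcu
  exacts [h hxu huv hxv hcu.symm hcuv, h huv hvy huy hcuv (hcuv ▸ hcu)]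

theorem fromRel_le_comap_fromRel {r : V → V → Prop} {s : W → W → Prop} {f : V → W}
    (hf : Function.Injective f) (h : ∀ a b, r a b → s (f a) (f b)) :
    fromRel r ≤ (fromRel s).comap f :=
  fun _ _ ⟨hne, hr⟩ => ⟨hf.ne hne, hr.imp (h _ _) (h _ _)⟩

end SimpleGraph

theorem Bool.toNat_add_toNat_of_ne {a b : Bool} (h : a ≠ b) : a.toNat + b.toNat = 1 := by
  cases a <;> cases b <;> simp_all

theorem two_mul_sum_toNat_of_card_eq {V : Type*} [Fintype V] {c : V → Bool}
    (h : Nat.card {v | c v = true} = Nat.card {v | c v = false}) :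
    2 * ∑ v, (c v).toNat = Fintype.card V := by
  have htrue : Nat.card {v | c v = true} = ∑ v, (c v).toNat := by
    rw [Nat.card_eq_fintype_card, Fintype.card_subtype, card_filter]
    exact sum_congr rfl fun v _ => by split <;> simp_all
  have hpart : Nat.card {v | c v = true} + Nat.card {v | c v = false} = Fintype.card V := by
    simpa [Nat.card_eq_fintype_card, Fintype.card_subtype] using
      card_filter_add_card_filter_not (s := univ) (fun v => c v = true)
  omega

theorem LEdge.succ {k a b : ℕ} (h : LEdge k a b) : LEdge (k + 1) a b := by
  rcases h with h | ⟨j, hj1, hjk, h⟩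
  exacts [.inl h, .inr ⟨j, hj1, hjk.trans k.le_succ, h⟩]

theorem LEdge.lt {k a b : ℕ} (h : LEdge k a b) : a < 6 + 2 * k ∧ b < 6 + 2 * k := by
  rcases h with h | ⟨j, -, hjk, h | h | h⟩ <;> simp_all [Prod.ext_iff] <;> omega

theorem LEdge_zero_iff (a b : ℕ) :
    LEdge 0 a b ↔
      (a, b) ∈ [(0, 2), (0, 3), (0, 5), (1, 2), (1, 3), (1, 5), (4, 2), (4, 3)] := by
  simp [LEdge]

theorem sum_toNat_eq_three_and_ne_of_noMonoP3_fin :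
    ∀ c : Fin 6 → Bool, ((fromRel (LEdge 0)).comap Fin.val).NoMonoP3 c →
      ∑ i, (c i).toNat = 3 ∧ c 4 ≠ c 5 := by
  simp only [NoMonoP3, comap_adj, fromRel_adj, LEdge_zero_iff]
  decide

theorem sum_toNat_eq_and_ne_of_noMonoP3_LEdge {k : ℕ} {c : ℕ → Bool}
    (h : (fromRel (LEdge k)).NoMonoP3 c) :
    ∑ i ∈ range (6 + 2 * k), (c i).toNat = 3 + k ∧ c (4 + 2 * k) ≠ c (5 + 2 * k) := by
  induction k with
  | zero =>
    simpa [Fin.sum_univ_eq_sum_range (fun i => (c i).toNat)] using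
      sum_toNat_eq_three_and_ne_of_noMonoP3_fin _ (h.comap Fin.val_injective le_rfl)
  | succ k ih =>
    obtain ⟨hsum, hends⟩ := ih <| h.comap (f := id) Function.injective_id <|
      fromRel_le_comap_fromRel Function.injective_id fun _ _ => LEdge.succ
    have rung : ∀ a b, (a, b) = (4 + 2 * k, 6 + 2 * k) ∨ (a, b) = (6 + 2 * k, 6 + 2 * k + 1) ∨
        (a, b) = (5 + 2 * k, 6 + 2 * k + 1) → (fromRel (LEdge (k + 1))).Adj a b := by
      intro a b hab
      simp only [Prod.ext_iff] at hab
      refine ⟨by omega, .inl (.inr ⟨k + 1, by omega, le_rfl, ?_⟩)⟩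
      simp only [Prod.ext_iff]
      omega
    have hnew : c (6 + 2 * k) ≠ c (6 + 2 * k + 1) :=
      h.ne_of_path_ends_ne (rung _ _ (.inl rfl)) (rung _ _ (.inr (.inl rfl)))
        (rung _ _ (.inr (.inr rfl))).symm (by omega) (by omega) hends
    refine ⟨?_, by convert hnew using 2 <;> ring⟩
    rw [show 6 + 2 * (k + 1) = 6 + 2 * k + 1 + 1 by ring, sum_range_succ, sum_range_succ, hsum,
      add_assoc, Bool.toNat_add_toNat_of_ne hnew]
    ring

theorem TEdge.lt {k a b : ℕ} (h : TEdge k a b) : a < 22 + 2 * k ∧ b < 22 + 2 * k := by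
  rcases h with h | h | ⟨a', b', h, rfl, rfl⟩ | h | ⟨a', b', h, rfl, rfl⟩ | h | h <;>
    (try have := LEdge.lt h) <;> omega

theorem Tgraph_eq_comap (k : ℕ) : Tgraph k = (fromRel (TEdge k)).comap Fin.val := by
  ext a b
  simp [Tgraph, Fin.val_eq_val]

theorem support_fromRel_TEdge_subset (k : ℕ) :
    (fromRel (TEdge k)).support ⊆ Set.range (Fin.val : Fin (22 + 2 * k) → ℕ) := by
  rintro a ⟨b, -, hab | hba⟩
  exacts [⟨⟨a, hab.lt.1⟩, rfl⟩, ⟨⟨a, hba.lt.2⟩, rfl⟩]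

theorem sum_range_TEdge_blocks (g : ℕ → ℕ) (k : ℕ) :
    ∑ i ∈ range (22 + 2 * k), g i = ∑ i ∈ range (6 + 2 * k), g i + g (6 + 2 * k) +
      ∑ i ∈ range 6, g (7 + 2 * k + i) + g (13 + 2 * k) +
      ∑ i ∈ range 6, g (14 + 2 * k + i) + g (20 + 2 * k) + g (21 + 2 * k) := by
  rw [show 22 + 2 * k = 6 + 2 * k + 16 by ring, sum_range_add]
  simp only [sum_range_succ, sum_range_zero]
  ring_nf

theorem two_mul_sum_toNat_ne_of_noMonoP3_TEdge {k : ℕ} {c : ℕ → Bool}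
    (h : (fromRel (TEdge k)).NoMonoP3 c) :
    2 * ∑ i ∈ range (22 + 2 * k), (c i).toNat ≠ 22 + 2 * k := by
  obtain ⟨hL, hE⟩ := sum_toNat_eq_and_ne_of_noMonoP3_LEdge <|
    h.comap (f := id) Function.injective_id <|
      fromRel_le_comap_fromRel Function.injective_id fun _ _ => Or.inl
  obtain ⟨hL₁, hE₁⟩ := sum_toNat_eq_and_ne_of_noMonoP3_LEdge (k := 0) <|
    h.comap (add_right_injective (7 + 2 * k)) <| fromRel_le_comap_fromRel
      (add_right_injective _) fun a b hab => .inr <| .inr <| .inl ⟨a, b, hab, rfl, rfl⟩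
  obtain ⟨hL₂, hE₂⟩ := sum_toNat_eq_and_ne_of_noMonoP3_LEdge (k := 0) <|
    h.comap (add_right_injective (14 + 2 * k)) <| fromRel_le_comap_fromRel
      (add_right_injective _) fun a b hab =>
        .inr <| .inr <| .inr <| .inr <| .inl ⟨a, b, hab, rfl, rfl⟩
  simp only [Function.comp_apply, mul_zero, add_zero, id] at hL hE hL₁ hE₁ hL₂ hE₂
  have adj : ∀ {a b}, TEdge k a b → a ≠ b → (fromRel (TEdge k)).Adj a b :=
    fun hab hne => ⟨hne, .inl hab⟩
  have apex : ∀ w x y, TEdge k (21 + 2 * k) w → TEdge k w x → TEdge k w y →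
      x < w → y < w → w < 21 + 2 * k → c x ≠ c y →
      (c (21 + 2 * k)).toNat + (c w).toNat = 1 :=
    fun w x y hzw hwx hwy hxw hyw hwz hxy => Bool.toNat_add_toNat_of_ne <|
      h.ne_of_neighbors_ne (adj hzw (by omega)) (adj hwx (by omega)) (adj hwy (by omega))
        (by omega) (by omega) hxy
  have h₀ := apex (6 + 2 * k) _ _ (by simp [TEdge]) (by simp [TEdge]) (by simp [TEdge])
    (by omega) (by omega) (by omega) hE
  have h₁ := apex (13 + 2 * k) _ _ (by simp [TEdge]) (by simp [TEdge]; omega)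
    (by simp [TEdge]; omega) (by omega) (by omega) (by omega) hE₁
  have h₂ := apex (20 + 2 * k) _ _ (by simp [TEdge]) (by simp [TEdge]; omega)
    (by simp [TEdge]; omega) (by omega) (by omega) (by omega) hE₂
  rw [sum_range_TEdge_blocks]
  omega

/-- For every k ≥ 0, the cubic graph T_k has no 4-weak bisection. -/
theorem stmt5 (k : ℕ) :
    ¬ ∃ c : Fin (22+2*k) → Bool,
      Nat.card {v | c v = true} = Nat.card {v | c v = false} ∧
        MonoAtMost (Tgraph k) c 2 := by
  rintro ⟨c, hbal, hmono⟩
  let c' : ℕ → Bool := fun n => if hn : n < 22 + 2 * k then c ⟨n, hn⟩ else false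
  have hc' : c' ∘ Fin.val = c := funext fun v => dif_pos v.isLt
  apply two_mul_sum_toNat_ne_of_noMonoP3_TEdge (c := c')
  · refine NoMonoP3.of_comap ?_ (support_fromRel_TEdge_subset k)
    rw [hc', ← Tgraph_eq_comap]
    exact noMonoP3_of_monoAtMost hmono
  · rw [← Fin.sum_univ_eq_sum_range (fun i => (c' i).toNat)]
    simpa [← hc'] using two_mul_sum_toNat_of_card_eq hbal
end

section
/- For every k ≥ 0, the vertex set of T_k can be partitioned into two color classes V₁, V₂ with ||V₁| - |V₂|| = 2 such that every monochromatic connected component has at most 2 vertices, but there is no such partition with |V₁| = |V₂|. -/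
open SimpleGraph

/- ===== auxiliary development ===== -/

lemma reach_eq_or_adj {W : Type*} (H : SimpleGraph W)
    (hdeg : ∀ v a b : W, H.Adj v a → H.Adj v b → a = b)
    {u v : W} (h : H.Reachable u v) : u = v ∨ H.Adj u v := by
  obtain ⟨w⟩ := h
  induction w with
  | nil => exact Or.inl rfl
  | cons h p ih =>
    rcases ih with rfl | hadj
    · exact Or.inr h
    · exact Or.inl (hdeg _ _ _ h.symm hadj)

lemma comp_card_le {W : Type*} (H : SimpleGraph W)
    (hdeg : ∀ v a b : W, H.Adj v a → H.Adj v b → a = b)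
    (comp : H.ConnectedComponent) : Nat.card comp.supp ≤ 2 := by
  obtain ⟨v, rfl⟩ := comp.exists_rep
  rw [Nat.card_coe_set_eq]
  by_cases hex : ∃ w, H.Adj v w
  · obtain ⟨w, hw⟩ := hex
    have hsub : (H.connectedComponentMk v).supp ⊆ {v, w} := by
      intro u hu
      rw [ConnectedComponent.mem_supp_iff, ConnectedComponent.eq] at hu
      rcases reach_eq_or_adj H hdeg hu with rfl | hadj
      · exact Set.mem_insert _ _
      · exact Or.inr (hdeg v u w hadj.symm hw)
    calc (H.connectedComponentMk v).supp.ncard ≤ ({v, w} : Set W).ncard :=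
          Set.ncard_le_ncard hsub (Set.toFinite _)
      _ ≤ ({w} : Set W).ncard + 1 := Set.ncard_insert_le _ _
      _ ≤ 2 := by simp
  · have hsub : (H.connectedComponentMk v).supp ⊆ {v} := by
      intro u hu
      rw [ConnectedComponent.mem_supp_iff, ConnectedComponent.eq] at hu
      rcases reach_eq_or_adj H hdeg hu with rfl | hadj
      · rfl
      · exact absurd ⟨u, hadj.symm⟩ hex
    calc (H.connectedComponentMk v).supp.ncard ≤ ({v} : Set W).ncard :=
          Set.ncard_le_ncard hsub (Set.toFinite _)
      _ ≤ 2 := by simp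

def LocalCond {V : Type*} (G : SimpleGraph V) (c : V → Bool) : Prop :=
  ∀ v a b : V, G.Adj v a → G.Adj v b → c a = c v → c b = c v → a = b

lemma monoAtMost_of_local {V : Type*} (G : SimpleGraph V) (c : V → Bool)
    (h : LocalCond G c) : MonoAtMost G c 2 := by
  intro b comp
  apply comp_card_le
  rintro ⟨v, hv⟩ ⟨a, ha⟩ ⟨b', hb⟩ hadj1 hadj2
  have h1 : G.Adj v a := by simpa using hadj1
  have h2 : G.Adj v b' := by simpa using hadj2
  have : a = b' := h v a b' h1 h2 (by exact ha.trans hv.symm) (by exact hb.trans hv.symm)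
  exact Subtype.ext this

lemma local_of_monoAtMost {V : Type*} [Finite V] (G : SimpleGraph V) (c : V → Bool)
    (h : MonoAtMost G c 2) : LocalCond G c := by
  intro v a b hadj1 hadj2 hca hcb
  by_contra hne
  set S : Set V := {u | c u = c v} with hS
  have hvS : v ∈ S := rfl
  have haS : a ∈ S := hca
  have hbS : b ∈ S := hcb
  set H := G.induce S with hH
  have hA1 : H.Adj ⟨v, hvS⟩ ⟨a, haS⟩ := by simpa [hH] using hadj1
  have hA2 : H.Adj ⟨v, hvS⟩ ⟨b, hbS⟩ := by simpa [hH] using hadj2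
  set comp := H.connectedComponentMk ⟨v, hvS⟩ with hcomp
  have hmem1 : (⟨a, haS⟩ : S) ∈ comp.supp := by
    rw [ConnectedComponent.mem_supp_iff, ConnectedComponent.eq]
    exact hA1.symm.reachable
  have hmem2 : (⟨b, hbS⟩ : S) ∈ comp.supp := by
    rw [ConnectedComponent.mem_supp_iff, ConnectedComponent.eq]
    exact hA2.symm.reachable
  have hmem0 : (⟨v, hvS⟩ : S) ∈ comp.supp := by
    rw [ConnectedComponent.mem_supp_iff]
  have hsub : ({⟨v, hvS⟩, ⟨a, haS⟩, ⟨b, hbS⟩} : Set S) ⊆ comp.supp := by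
    rintro x (rfl | rfl | rfl) <;> assumption
  have h3 : ({⟨v, hvS⟩, ⟨a, haS⟩, ⟨b, hbS⟩} : Set S).ncard = 3 := by
    rw [Set.ncard_eq_three]
    refine ⟨_, _, _, ?_, ?_, ?_, rfl⟩
    · exact fun he => hadj1.ne (congrArg Subtype.val he)
    · exact fun he => hadj2.ne (congrArg Subtype.val he)
    · exact fun he => hne (congrArg Subtype.val he)
  have hle := h (c v) comp
  rw [Nat.card_coe_set_eq] at hle
  have := Set.ncard_le_ncard hsub (Set.toFinite _)
  omega

-- base edges of L_k
lemma le02 (k : ℕ) : LEdge k 0 2 := Or.inl (by simp)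
lemma le03 (k : ℕ) : LEdge k 0 3 := Or.inl (by simp)
lemma le05 (k : ℕ) : LEdge k 0 5 := Or.inl (by simp)
lemma le12 (k : ℕ) : LEdge k 1 2 := Or.inl (by simp)
lemma le13 (k : ℕ) : LEdge k 1 3 := Or.inl (by simp)
lemma le15 (k : ℕ) : LEdge k 1 5 := Or.inl (by simp)
lemma le42 (k : ℕ) : LEdge k 4 2 := Or.inl (by simp)
lemma le43 (k : ℕ) : LEdge k 4 3 := Or.inl (by simp)

lemma rung1 (k j : ℕ) (h1 : 1 ≤ j) (h2 : j ≤ k) : LEdge k (4+2*j) (5+2*j) :=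
  Or.inr ⟨j, h1, h2, Or.inl rfl⟩
lemma rung2 (k j : ℕ) (h1 : 1 ≤ j) (h2 : j ≤ k) : LEdge k (2+2*j) (4+2*j) :=
  Or.inr ⟨j, h1, h2, Or.inr (Or.inl rfl)⟩
lemma rung3 (k j : ℕ) (h1 : 1 ≤ j) (h2 : j ≤ k) : LEdge k (3+2*j) (5+2*j) :=
  Or.inr ⟨j, h1, h2, Or.inr (Or.inr rfl)⟩

/-- exclusion hypothesis at the `TEdge` level -/
def HTd (k : ℕ) (d : ℕ → Bool) : Prop :=
  ∀ v a b : ℕ, v < 22+2*k → a < 22+2*k → b < 22+2*k → v ≠ a → v ≠ b → a ≠ b →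
    (TEdge k v a ∨ TEdge k a v) → (TEdge k v b ∨ TEdge k b v) →
    ¬(d a = d v ∧ d b = d v)

lemma baseBool : ∀ (b0 b1 b2 b3 b4 b5 b : Bool),
    (¬(b2 = b0 ∧ b3 = b0) ∧ ¬(b2 = b0 ∧ b5 = b0) ∧ ¬(b3 = b0 ∧ b5 = b0) ∧
    ¬(b2 = b1 ∧ b3 = b1) ∧ ¬(b2 = b1 ∧ b5 = b1) ∧ ¬(b3 = b1 ∧ b5 = b1) ∧
    ¬(b0 = b2 ∧ b1 = b2) ∧ ¬(b0 = b2 ∧ b4 = b2) ∧ ¬(b1 = b2 ∧ b4 = b2) ∧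
    ¬(b0 = b3 ∧ b1 = b3) ∧ ¬(b0 = b3 ∧ b4 = b3) ∧ ¬(b1 = b3 ∧ b4 = b3) ∧
    ¬(b2 = b4 ∧ b3 = b4) ∧ ¬(b0 = b5 ∧ b1 = b5)) →
    (b4 ≠ b5 ∧
      ((if b0 = b then 1 else 0) + (if b1 = b then 1 else 0) + (if b2 = b then 1 else 0)
        + (if b3 = b then 1 else 0) + (if b4 = b then 1 else 0) + (if b5 = b then 1 else 0) : ℕ)
        = 3) := by
  decide

lemma rungBool : ∀ (x' y' x y : Bool),
    (x' ≠ y' ∧ ¬(y = x ∧ x' = x) ∧ ¬(x = y ∧ y' = y)) → x ≠ y := by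
  decide

/-- The ladder invariant. -/
lemma ladderInv (k : ℕ) (d : ℕ → Bool) (hT : HTd k d) :
    ∀ m, m ≤ k → d (4+2*m) ≠ d (5+2*m) ∧
      ∀ b : Bool, (∑ i ∈ Finset.range (6+2*m), if d i = b then 1 else 0) = 3+m := by
  intro m
  induction m with
  | zero =>
    intro _
    have E := fun (v a b : ℕ) hv ha hb h1 h2 h3 e1 e2 =>
      hT v a b hv ha hb h1 h2 h3 (Or.inl (Or.inl e1)) (Or.inl (Or.inl e2))
    have h02 := E 0 2 3 (by omega) (by omega) (by omega) (by omega) (by omega) (by omega)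
      (le02 k) (le03 k)
    have h03 := E 0 2 5 (by omega) (by omega) (by omega) (by omega) (by omega) (by omega)
      (le02 k) (le05 k)
    have h05 := E 0 3 5 (by omega) (by omega) (by omega) (by omega) (by omega) (by omega)
      (le03 k) (le05 k)
    have h12 := E 1 2 3 (by omega) (by omega) (by omega) (by omega) (by omega) (by omega)
      (le12 k) (le13 k)
    have h13 := E 1 2 5 (by omega) (by omega) (by omega) (by omega) (by omega) (by omega)
      (le12 k) (le15 k)
    have h15 := E 1 3 5 (by omega) (by omega) (by omega) (by omega) (by omega) (by omega)
      (le13 k) (le15 k)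
    have E' := fun (v a b : ℕ) hv ha hb h1 h2 h3 e1 e2 =>
      hT v a b hv ha hb h1 h2 h3 (Or.inr (Or.inl e1)) (Or.inr (Or.inl e2))
    have h20 := E' 2 0 1 (by omega) (by omega) (by omega) (by omega) (by omega) (by omega)
      (le02 k) (le12 k)
    have h21 := hT 2 0 4 (by omega) (by omega) (by omega) (by omega) (by omega) (by omega)
      (Or.inr (Or.inl (le02 k))) (Or.inr (Or.inl (le42 k)))
    have h24 := hT 2 1 4 (by omega) (by omega) (by omega) (by omega) (by omega) (by omega)
      (Or.inr (Or.inl (le12 k))) (Or.inr (Or.inl (le42 k)))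
    have h30 := hT 3 0 1 (by omega) (by omega) (by omega) (by omega) (by omega) (by omega)
      (Or.inr (Or.inl (le03 k))) (Or.inr (Or.inl (le13 k)))
    have h31 := hT 3 0 4 (by omega) (by omega) (by omega) (by omega) (by omega) (by omega)
      (Or.inr (Or.inl (le03 k))) (Or.inr (Or.inl (le43 k)))
    have h34 := hT 3 1 4 (by omega) (by omega) (by omega) (by omega) (by omega) (by omega)
      (Or.inr (Or.inl (le13 k))) (Or.inr (Or.inl (le43 k)))
    have h4 := hT 4 2 3 (by omega) (by omega) (by omega) (by omega) (by omega) (by omega)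
      (Or.inl (Or.inl (le42 k))) (Or.inl (Or.inl (le43 k)))
    have h5 := hT 5 0 1 (by omega) (by omega) (by omega) (by omega) (by omega) (by omega)
      (Or.inr (Or.inl (le05 k))) (Or.inr (Or.inl (le15 k)))
    constructor
    · exact (baseBool (d 0) (d 1) (d 2) (d 3) (d 4) (d 5) true
        ⟨h02, h03, h05, h12, h13, h15, h20, h21, h24, h30, h31, h34, h4, h5⟩).1
    · intro b
      have := (baseBool (d 0) (d 1) (d 2) (d 3) (d 4) (d 5) b
        ⟨h02, h03, h05, h12, h13, h15, h20, h21, h24, h30, h31, h34, h4, h5⟩).2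
      rw [show (6+2*0 : ℕ) = 6 by norm_num, Finset.sum_range_succ, Finset.sum_range_succ,
        Finset.sum_range_succ, Finset.sum_range_succ, Finset.sum_range_succ,
        Finset.sum_range_succ, Finset.sum_range_zero]
      omega
  | succ n ih =>
    intro hle
    obtain ⟨hne, hcount⟩ := ih (by omega)
    have e1 := rung1 k (n+1) (by omega) (by omega)
    have e2 := rung2 k (n+1) (by omega) (by omega)
    have e3 := rung3 k (n+1) (by omega) (by omega)
    have hx := hT (4+2*(n+1)) (5+2*(n+1)) (2+2*(n+1)) (by omega) (by omega) (by omega)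
      (by omega) (by omega) (by omega) (Or.inl (Or.inl e1)) (Or.inr (Or.inl e2))
    have hy := hT (5+2*(n+1)) (4+2*(n+1)) (3+2*(n+1)) (by omega) (by omega) (by omega)
      (by omega) (by omega) (by omega) (Or.inr (Or.inl e1)) (Or.inr (Or.inl e3))
    have hidx : 2+2*(n+1) = 4+2*n := by ring
    have hidy : 3+2*(n+1) = 5+2*n := by ring
    rw [hidx] at hx
    rw [hidy] at hy
    have hnew : d (4+2*(n+1)) ≠ d (5+2*(n+1)) :=
      rungBool (d (4+2*n)) (d (5+2*n)) (d (4+2*(n+1))) (d (5+2*(n+1))) ⟨hne, hx, hy⟩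
    refine ⟨hnew, fun b => ?_⟩
    have hsplit : 6+2*(n+1) = (6+2*n) + 1 + 1 := by ring
    rw [hsplit, Finset.sum_range_succ, Finset.sum_range_succ, hcount b]
    have h6 : 4+2*(n+1) = 6+2*n := by ring
    have h7 : 5+2*(n+1) = 6+2*n+1 := by ring
    rw [h6, h7] at hnew
    cases hv : d (6+2*n) <;> cases hv' : d (6+2*n+1) <;> cases b <;> simp_all <;> omega

/-- The `L₀`-copy invariant at offset `t`. -/
lemma copyInv (k t : ℕ) (d : ℕ → Bool) (hT : HTd k d) (ht : t + 6 ≤ 22+2*k)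
    (hemb : ∀ a b : ℕ, LEdge 0 a b → TEdge k (t+a) (t+b)) :
    d (t+4) ≠ d (t+5) ∧
      ∀ b : Bool,
        ((if d (t+0) = b then 1 else 0) + (if d (t+1) = b then 1 else 0)
          + (if d (t+2) = b then 1 else 0) + (if d (t+3) = b then 1 else 0)
          + (if d (t+4) = b then 1 else 0) + (if d (t+5) = b then 1 else 0) : ℕ) = 3 := by
  have E := fun (v a b : ℕ) hv ha hb h1 h2 h3
      (e1 : TEdge k v a ∨ TEdge k a v) (e2 : TEdge k v b ∨ TEdge k b v) =>
    hT v a b hv ha hb h1 h2 h3 e1 e2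
  have h02 := E (t+0) (t+2) (t+3) (by omega) (by omega) (by omega) (by omega) (by omega)
    (by omega) (Or.inl (hemb 0 2 (le02 0))) (Or.inl (hemb 0 3 (le03 0)))
  have h03 := E (t+0) (t+2) (t+5) (by omega) (by omega) (by omega) (by omega) (by omega)
    (by omega) (Or.inl (hemb 0 2 (le02 0))) (Or.inl (hemb 0 5 (le05 0)))
  have h05 := E (t+0) (t+3) (t+5) (by omega) (by omega) (by omega) (by omega) (by omega)
    (by omega) (Or.inl (hemb 0 3 (le03 0))) (Or.inl (hemb 0 5 (le05 0)))
  have h12 := E (t+1) (t+2) (t+3) (by omega) (by omega) (by omega) (by omega) (by omega)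
    (by omega) (Or.inl (hemb 1 2 (le12 0))) (Or.inl (hemb 1 3 (le13 0)))
  have h13 := E (t+1) (t+2) (t+5) (by omega) (by omega) (by omega) (by omega) (by omega)
    (by omega) (Or.inl (hemb 1 2 (le12 0))) (Or.inl (hemb 1 5 (le15 0)))
  have h15 := E (t+1) (t+3) (t+5) (by omega) (by omega) (by omega) (by omega) (by omega)
    (by omega) (Or.inl (hemb 1 3 (le13 0))) (Or.inl (hemb 1 5 (le15 0)))
  have h20 := E (t+2) (t+0) (t+1) (by omega) (by omega) (by omega) (by omega) (by omega)
    (by omega) (Or.inr (hemb 0 2 (le02 0))) (Or.inr (hemb 1 2 (le12 0)))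
  have h21 := E (t+2) (t+0) (t+4) (by omega) (by omega) (by omega) (by omega) (by omega)
    (by omega) (Or.inr (hemb 0 2 (le02 0))) (Or.inr (hemb 4 2 (le42 0)))
  have h24 := E (t+2) (t+1) (t+4) (by omega) (by omega) (by omega) (by omega) (by omega)
    (by omega) (Or.inr (hemb 1 2 (le12 0))) (Or.inr (hemb 4 2 (le42 0)))
  have h30 := E (t+3) (t+0) (t+1) (by omega) (by omega) (by omega) (by omega) (by omega)
    (by omega) (Or.inr (hemb 0 3 (le03 0))) (Or.inr (hemb 1 3 (le13 0)))
  have h31 := E (t+3) (t+0) (t+4) (by omega) (by omega) (by omega) (by omega) (by omega)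
    (by omega) (Or.inr (hemb 0 3 (le03 0))) (Or.inr (hemb 4 3 (le43 0)))
  have h34 := E (t+3) (t+1) (t+4) (by omega) (by omega) (by omega) (by omega) (by omega)
    (by omega) (Or.inr (hemb 1 3 (le13 0))) (Or.inr (hemb 4 3 (le43 0)))
  have h4 := E (t+4) (t+2) (t+3) (by omega) (by omega) (by omega) (by omega) (by omega)
    (by omega) (Or.inl (hemb 4 2 (le42 0))) (Or.inl (hemb 4 3 (le43 0)))
  have h5 := E (t+5) (t+0) (t+1) (by omega) (by omega) (by omega) (by omega) (by omega)
    (by omega) (Or.inr (hemb 0 5 (le05 0))) (Or.inr (hemb 1 5 (le15 0)))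
  refine ⟨(baseBool (d (t+0)) (d (t+1)) (d (t+2)) (d (t+3)) (d (t+4)) (d (t+5)) true
      ⟨h02, h03, h05, h12, h13, h15, h20, h21, h24, h30, h31, h34, h4, h5⟩).1, fun b => ?_⟩
  exact (baseBool (d (t+0)) (d (t+1)) (d (t+2)) (d (t+3)) (d (t+4)) (d (t+5)) b
      ⟨h02, h03, h05, h12, h13, h15, h20, h21, h24, h30, h31, h34, h4, h5⟩).2

lemma iteBool (x w b : Bool) (h : w ≠ x) :
    (if x = b then (1:ℕ) else 0) + (if w = b then 1 else 0) = 1 := by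
  revert h; cases x <;> cases w <;> cases b <;> decide

lemma apexBool : ∀ (x y z w : Bool), x ≠ y → ¬(x = z ∧ w = z) → ¬(y = z ∧ w = z) → w ≠ z := by
  decide

/-- The master counting lemma: any coloring satisfying the exclusion conditions has
`10+k` vertices of the center's color and `12+k` of the other color. -/
lemma countKey (k : ℕ) (d : ℕ → Bool) (hT : HTd k d) :
    ∀ b : Bool, (∑ i ∈ Finset.range (22+2*k), if d i = b then 1 else 0)
      = if d (21+2*k) = b then 10+k else 12+k := by
  -- ladder
  obtain ⟨hlad, hladc⟩ := ladderInv k d hT k le_rfl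
  -- copies
  obtain ⟨hc1, hc1c⟩ := copyInv k (7+2*k) d hT (by omega)
    (fun a b h => Or.inr (Or.inr (Or.inl ⟨a, b, h, rfl, rfl⟩)))
  obtain ⟨hc2, hc2c⟩ := copyInv k (14+2*k) d hT (by omega)
    (fun a b h => Or.inr (Or.inr (Or.inr (Or.inr (Or.inl ⟨a, b, h, rfl, rfl⟩)))))
  -- the three apexes differ in color from the center
  have hwz1 : d (21+2*k) ≠ d (6+2*k) := by
    refine apexBool (d (4+2*k)) (d (5+2*k)) (d (6+2*k)) (d (21+2*k)) hlad ?_ ?_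
    · exact hT (6+2*k) (4+2*k) (21+2*k) (by omega) (by omega) (by omega) (by omega) (by omega)
        (by omega) (Or.inl (Or.inr (Or.inl ⟨rfl, Or.inl rfl⟩)))
        (Or.inr (Or.inr (Or.inr (Or.inr (Or.inr (Or.inr (Or.inr ⟨rfl, Or.inl rfl⟩)))))))
    · exact hT (6+2*k) (5+2*k) (21+2*k) (by omega) (by omega) (by omega) (by omega) (by omega)
        (by omega) (Or.inl (Or.inr (Or.inl ⟨rfl, Or.inr rfl⟩)))
        (Or.inr (Or.inr (Or.inr (Or.inr (Or.inr (Or.inr (Or.inr ⟨rfl, Or.inl rfl⟩)))))))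
  have hwz2 : d (21+2*k) ≠ d (13+2*k) := by
    have h1 : (7+2*k)+4 = 11+2*k := by ring
    have h2 : (7+2*k)+5 = 12+2*k := by ring
    rw [h1, h2] at hc1
    refine apexBool (d (11+2*k)) (d (12+2*k)) (d (13+2*k)) (d (21+2*k)) hc1 ?_ ?_
    · exact hT (13+2*k) (11+2*k) (21+2*k) (by omega) (by omega) (by omega) (by omega) (by omega)
        (by omega) (Or.inl (Or.inr (Or.inr (Or.inr (Or.inl ⟨rfl, Or.inl rfl⟩)))))
        (Or.inr (Or.inr (Or.inr (Or.inr (Or.inr (Or.inr (Or.inr ⟨rfl, Or.inr (Or.inl rfl)⟩)))))))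
    · exact hT (13+2*k) (12+2*k) (21+2*k) (by omega) (by omega) (by omega) (by omega) (by omega)
        (by omega) (Or.inl (Or.inr (Or.inr (Or.inr (Or.inl ⟨rfl, Or.inr rfl⟩)))))
        (Or.inr (Or.inr (Or.inr (Or.inr (Or.inr (Or.inr (Or.inr ⟨rfl, Or.inr (Or.inl rfl)⟩)))))))
  have hwz3 : d (21+2*k) ≠ d (20+2*k) := by
    have h1 : (14+2*k)+4 = 18+2*k := by ring
    have h2 : (14+2*k)+5 = 19+2*k := by ring
    rw [h1, h2] at hc2
    refine apexBool (d (18+2*k)) (d (19+2*k)) (d (20+2*k)) (d (21+2*k)) hc2 ?_ ?_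
    · exact hT (20+2*k) (18+2*k) (21+2*k) (by omega) (by omega) (by omega) (by omega) (by omega)
        (by omega) (Or.inl (Or.inr (Or.inr (Or.inr (Or.inr (Or.inr (Or.inl ⟨rfl, Or.inl rfl⟩)))))))
        (Or.inr (Or.inr (Or.inr (Or.inr (Or.inr (Or.inr (Or.inr ⟨rfl, Or.inr (Or.inr rfl)⟩)))))))
    · exact hT (20+2*k) (19+2*k) (21+2*k) (by omega) (by omega) (by omega) (by omega) (by omega)
        (by omega) (Or.inl (Or.inr (Or.inr (Or.inr (Or.inr (Or.inr (Or.inl ⟨rfl, Or.inr rfl⟩)))))))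
        (Or.inr (Or.inr (Or.inr (Or.inr (Or.inr (Or.inr (Or.inr ⟨rfl, Or.inr (Or.inr rfl)⟩)))))))
  intro b
  have hsplit : 22+2*k = (6+2*k) + 16 := by ring
  rw [hsplit, Finset.sum_range_add, hladc b]
  have hexp : (∑ x ∈ Finset.range 16, if d (6+2*k+x) = b then 1 else 0 : ℕ)
      = (if d (6+2*k) = b then 1 else 0)
      + ((if d (7+2*k+0) = b then 1 else 0) + (if d (7+2*k+1) = b then 1 else 0)
        + (if d (7+2*k+2) = b then 1 else 0) + (if d (7+2*k+3) = b then 1 else 0)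
        + (if d (7+2*k+4) = b then 1 else 0) + (if d (7+2*k+5) = b then 1 else 0))
      + (if d (13+2*k) = b then 1 else 0)
      + ((if d (14+2*k+0) = b then 1 else 0) + (if d (14+2*k+1) = b then 1 else 0)
        + (if d (14+2*k+2) = b then 1 else 0) + (if d (14+2*k+3) = b then 1 else 0)
        + (if d (14+2*k+4) = b then 1 else 0) + (if d (14+2*k+5) = b then 1 else 0))
      + (if d (20+2*k) = b then 1 else 0)
      + (if d (21+2*k) = b then 1 else 0) := by
    rw [Finset.sum_range_succ, Finset.sum_range_succ, Finset.sum_range_succ,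
      Finset.sum_range_succ, Finset.sum_range_succ, Finset.sum_range_succ,
      Finset.sum_range_succ, Finset.sum_range_succ, Finset.sum_range_succ,
      Finset.sum_range_succ, Finset.sum_range_succ, Finset.sum_range_succ,
      Finset.sum_range_succ, Finset.sum_range_succ, Finset.sum_range_succ,
      Finset.sum_range_succ, Finset.sum_range_zero]
    have e0 : 6+2*k+0 = 6+2*k := by ring
    have e1 : 6+2*k+1 = 7+2*k+0 := by ring
    have e2 : 6+2*k+2 = 7+2*k+1 := by ring
    have e3 : 6+2*k+3 = 7+2*k+2 := by ring
    have e4 : 6+2*k+4 = 7+2*k+3 := by ring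
    have e5 : 6+2*k+5 = 7+2*k+4 := by ring
    have e6 : 6+2*k+6 = 7+2*k+5 := by ring
    have e7 : 6+2*k+7 = 13+2*k := by ring
    have e8 : 6+2*k+8 = 14+2*k+0 := by ring
    have e9 : 6+2*k+9 = 14+2*k+1 := by ring
    have e10 : 6+2*k+10 = 14+2*k+2 := by ring
    have e11 : 6+2*k+11 = 14+2*k+3 := by ring
    have e12 : 6+2*k+12 = 14+2*k+4 := by ring
    have e13 : 6+2*k+13 = 14+2*k+5 := by ring
    have e14 : 6+2*k+14 = 20+2*k := by ring
    have e15 : 6+2*k+15 = 21+2*k := by ring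
    rw [e0, e1, e2, e3, e4, e5, e6, e7, e8, e9, e10, e11, e12, e13, e14, e15]
    ring
  rw [hexp, hc1c b, hc2c b]
  -- now pure arithmetic with three apex ≠ center facts
  have a1 := iteBool (d (6+2*k)) (d (21+2*k)) b hwz1
  have a2 := iteBool (d (13+2*k)) (d (21+2*k)) b hwz2
  have a3 := iteBool (d (20+2*k)) (d (21+2*k)) b hwz3
  by_cases h : d (21+2*k) = b
  · simp only [if_pos h] at a1 a2 a3 ⊢
    omega
  · simp only [if_neg h] at a1 a2 a3 ⊢
    omega

lemma cardDiff (k : ℕ) (c : Fin (22+2*k) → Bool) (hL : LocalCond (Tgraph k) c) :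
    |(Nat.card {v | c v = true} : ℤ) - (Nat.card {v | c v = false} : ℤ)| = 2 := by
  classical
  set d : ℕ → Bool := fun n => if h : n < 22+2*k then c ⟨n, h⟩ else false with hd
  have hdv : ∀ v : Fin (22+2*k), d v.val = c v := by
    intro v
    rw [hd]
    simp [v.isLt]
  have hT : HTd k d := by
    intro v a b hv ha hb hva hvb hab e1 e2 hcon
    have hAdj1 : (Tgraph k).Adj ⟨v, hv⟩ ⟨a, ha⟩ := by
      rw [Tgraph, fromRel_adj]
      exact ⟨fun e => hva (congrArg Fin.val e), e1⟩
    have hAdj2 : (Tgraph k).Adj ⟨v, hv⟩ ⟨b, hb⟩ := by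
      rw [Tgraph, fromRel_adj]
      exact ⟨fun e => hvb (congrArg Fin.val e), e2⟩
    have h1 : c ⟨a, ha⟩ = c ⟨v, hv⟩ := by
      rw [← hdv ⟨a, ha⟩, ← hdv ⟨v, hv⟩]; exact hcon.1
    have h2 : c ⟨b, hb⟩ = c ⟨v, hv⟩ := by
      rw [← hdv ⟨b, hb⟩, ← hdv ⟨v, hv⟩]; exact hcon.2
    exact hab (congrArg Fin.val (hL _ _ _ hAdj1 hAdj2 h1 h2))
  have hcard : ∀ b : Bool, Nat.card {v : Fin (22+2*k) | c v = b}
      = ∑ i ∈ Finset.range (22+2*k), (if d i = b then 1 else 0) := by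
    intro b
    rw [Nat.card_coe_set_eq, Set.ncard_eq_toFinset_card', Set.toFinset_setOf,
      Finset.card_filter, ← Fin.sum_univ_eq_sum_range (fun i => if d i = b then 1 else 0)]
    refine Finset.sum_congr rfl fun v _ => ?_
    rw [hdv v]
  rw [hcard true, hcard false, countKey k d hT true, countKey k d hT false]
  cases hw : d (21+2*k)
  · rw [if_neg (by simp [hw]), if_pos (by simp [hw])]
    push_cast
    rw [show ((12:ℤ)+k - (10+k)) = 2 by ring]
    norm_num
  · rw [if_pos (by simp [hw]), if_neg (by simp [hw])]
    push_cast
    rw [show ((10:ℤ)+k - (12+k)) = -2 by ring]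
    norm_num

/-- The explicit good coloring of `T_k`. -/
def col (k n : ℕ) : Bool :=
  if n < 2 then decide (k % 2 = 1)
  else if n < 4 then decide (k % 2 = 0)
  else if n < 6+2*k then decide ((k + n/2 + n) % 2 = 1)
  else if n = 6+2*k then true
  else if n = 21+2*k then false
  else decide ((n - (7+2*k)) % 7 = 0 ∨ (n - (7+2*k)) % 7 = 1
    ∨ (n - (7+2*k)) % 7 = 4 ∨ (n - (7+2*k)) % 7 = 6)

lemma col_lo (k n : ℕ) (h : n < 2) : col k n = decide (k % 2 = 1) := by
  rw [col, if_pos h]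

lemma col_lo2 (k n : ℕ) (h2 : 2 ≤ n) (h : n < 4) : col k n = decide (k % 2 = 0) := by
  rw [col, if_neg (by omega), if_pos h]

lemma col_mid (k n : ℕ) (h4 : 4 ≤ n) (h : n < 6+2*k) :
    col k n = decide ((k + n/2 + n) % 2 = 1) := by
  rw [col, if_neg (by omega), if_neg (by omega), if_pos h]

lemma col_apex1 (k : ℕ) : col k (6+2*k) = true := by
  rw [col, if_neg (by omega), if_neg (by omega), if_neg (by omega), if_pos rfl]

lemma col_center (k : ℕ) : col k (21+2*k) = false := by
  rw [col, if_neg (by omega), if_neg (by omega), if_neg (by omega), if_neg (by omega),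
    if_pos rfl]

lemma col_copy1 (k a : ℕ) (h : a ≤ 6) :
    col k (7+2*k+a) = decide (a = 0 ∨ a = 1 ∨ a = 4 ∨ a = 6) := by
  rw [col, if_neg (by omega), if_neg (by omega), if_neg (by omega), if_neg (by omega),
    if_neg (by omega), decide_eq_decide]
  omega

lemma col_copy2 (k a : ℕ) (h : a ≤ 6) :
    col k (14+2*k+a) = decide (a = 0 ∨ a = 1 ∨ a = 4 ∨ a = 6) := by
  rw [col, if_neg (by omega), if_neg (by omega), if_neg (by omega), if_neg (by omega),
    if_neg (by omega), decide_eq_decide]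
  omega

lemma col_mono (k a b : ℕ) (hE : TEdge k a b) (hc : col k a = col k b) :
    (a = 6+2*k ∧ b = 5+2*k) ∨ (a = 13+2*k ∧ b = 11+2*k) ∨ (a = 20+2*k ∧ b = 18+2*k) := by
  rcases hE with hL | ⟨rfl, rfl | rfl⟩ | ⟨a', b', hL0, rfl, rfl⟩ | ⟨rfl, rfl | rfl⟩
    | ⟨a', b', hL0, rfl, rfl⟩ | ⟨rfl, rfl | rfl⟩ | ⟨rfl, rfl | rfl | rfl⟩
  · -- ladder edges
    rcases hL with hm | ⟨j, hj1, hj2, h | h | h⟩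
    · simp only [Set.mem_insert_iff, Set.mem_singleton_iff, Prod.mk.injEq] at hm
      rcases hm with ⟨rfl, rfl⟩ | ⟨rfl, rfl⟩ | ⟨rfl, rfl⟩ | ⟨rfl, rfl⟩ | ⟨rfl, rfl⟩
        | ⟨rfl, rfl⟩ | ⟨rfl, rfl⟩ | ⟨rfl, rfl⟩
      · rw [col_lo k 0 (by omega), col_lo2 k 2 (by omega) (by omega), decide_eq_decide] at hc
        omega
      · rw [col_lo k 0 (by omega), col_lo2 k 3 (by omega) (by omega), decide_eq_decide] at hc
        omega
      · rw [col_lo k 0 (by omega), col_mid k 5 (by omega) (by omega), decide_eq_decide] at hc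
        omega
      · rw [col_lo k 1 (by omega), col_lo2 k 2 (by omega) (by omega), decide_eq_decide] at hc
        omega
      · rw [col_lo k 1 (by omega), col_lo2 k 3 (by omega) (by omega), decide_eq_decide] at hc
        omega
      · rw [col_lo k 1 (by omega), col_mid k 5 (by omega) (by omega), decide_eq_decide] at hc
        omega
      · rw [col_mid k 4 (by omega) (by omega), col_lo2 k 2 (by omega) (by omega),
          decide_eq_decide] at hc
        omega
      · rw [col_mid k 4 (by omega) (by omega), col_lo2 k 3 (by omega) (by omega),
          decide_eq_decide] at hc
        omega
    · rw [Prod.mk.injEq] at h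
      obtain ⟨rfl, rfl⟩ := h
      rw [col_mid k (4+2*j) (by omega) (by omega), col_mid k (5+2*j) (by omega) (by omega),
        decide_eq_decide] at hc
      omega
    · rw [Prod.mk.injEq] at h
      obtain ⟨rfl, rfl⟩ := h
      rw [col_mid k (2+2*j) (by omega) (by omega), col_mid k (4+2*j) (by omega) (by omega),
        decide_eq_decide] at hc
      omega
    · rw [Prod.mk.injEq] at h
      obtain ⟨rfl, rfl⟩ := h
      rw [col_mid k (3+2*j) (by omega) (by omega), col_mid k (5+2*j) (by omega) (by omega),
        decide_eq_decide] at hc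
      omega
  · -- apex1 -- 4+2k
    rw [col_apex1, col_mid k (4+2*k) (by omega) (by omega), eq_comm, decide_eq_true_eq] at hc
    omega
  · -- apex1 -- 5+2k : monochromatic
    omega
  · -- copy1 edges
    rcases hL0 with hm | ⟨j, hj1, hj2, _⟩
    · simp only [Set.mem_insert_iff, Set.mem_singleton_iff, Prod.mk.injEq] at hm
      rcases hm with ⟨rfl, rfl⟩ | ⟨rfl, rfl⟩ | ⟨rfl, rfl⟩ | ⟨rfl, rfl⟩ | ⟨rfl, rfl⟩
        | ⟨rfl, rfl⟩ | ⟨rfl, rfl⟩ | ⟨rfl, rfl⟩ <;>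
      · rw [col_copy1 k _ (by omega), col_copy1 k _ (by omega), decide_eq_decide] at hc
        omega
    · omega
  · -- apex2 -- 11+2k : monochromatic
    omega
  · -- apex2 -- 12+2k
    rw [show (13+2*k) = 7+2*k+6 by ring, show (12+2*k) = 7+2*k+5 by ring,
      col_copy1 k 6 (by omega), col_copy1 k 5 (by omega), decide_eq_decide] at hc
    omega
  · -- copy2 edges
    rcases hL0 with hm | ⟨j, hj1, hj2, _⟩
    · simp only [Set.mem_insert_iff, Set.mem_singleton_iff, Prod.mk.injEq] at hm
      rcases hm with ⟨rfl, rfl⟩ | ⟨rfl, rfl⟩ | ⟨rfl, rfl⟩ | ⟨rfl, rfl⟩ | ⟨rfl, rfl⟩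
        | ⟨rfl, rfl⟩ | ⟨rfl, rfl⟩ | ⟨rfl, rfl⟩ <;>
      · rw [col_copy2 k _ (by omega), col_copy2 k _ (by omega), decide_eq_decide] at hc
        omega
    · omega
  · -- apex3 -- 18+2k : monochromatic
    omega
  · -- apex3 -- 19+2k
    rw [show (20+2*k) = 14+2*k+6 by ring, show (19+2*k) = 14+2*k+5 by ring,
      col_copy2 k 6 (by omega), col_copy2 k 5 (by omega), decide_eq_decide] at hc
    omega
  · -- center -- apex1
    rw [col_center, col_apex1] at hc
    exact absurd hc (by simp)
  · -- center -- apex2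
    rw [col_center, show (13+2*k) = 7+2*k+6 by ring, col_copy1 k 6 (by omega), eq_comm,
      decide_eq_false_iff_not] at hc
    omega
  · -- center -- apex3
    rw [col_center, show (20+2*k) = 14+2*k+6 by ring, col_copy2 k 6 (by omega), eq_comm,
      decide_eq_false_iff_not] at hc
    omega


lemma col_local (k : ℕ) : LocalCond (Tgraph k) (fun v => col k v.val) := by
  intro v a b hadj1 hadj2 hca hcb
  rw [Tgraph, SimpleGraph.fromRel_adj] at hadj1 hadj2
  obtain ⟨-, he1⟩ := hadj1
  obtain ⟨-, he2⟩ := hadj2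
  simp only at hca hcb
  have hp1 : (v.val = 6+2*k ∧ a.val = 5+2*k) ∨ (v.val = 13+2*k ∧ a.val = 11+2*k)
      ∨ (v.val = 20+2*k ∧ a.val = 18+2*k) ∨ (a.val = 6+2*k ∧ v.val = 5+2*k)
      ∨ (a.val = 13+2*k ∧ v.val = 11+2*k) ∨ (a.val = 20+2*k ∧ v.val = 18+2*k) := by
    rcases he1 with h | h
    · rcases col_mono k v.val a.val h hca.symm with h' | h' | h'
      · exact Or.inl h'
      · exact Or.inr (Or.inl h')
      · exact Or.inr (Or.inr (Or.inl h'))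
    · rcases col_mono k a.val v.val h hca with h' | h' | h'
      · exact Or.inr (Or.inr (Or.inr (Or.inl h')))
      · exact Or.inr (Or.inr (Or.inr (Or.inr (Or.inl h'))))
      · exact Or.inr (Or.inr (Or.inr (Or.inr (Or.inr h'))))
  have hp2 : (v.val = 6+2*k ∧ b.val = 5+2*k) ∨ (v.val = 13+2*k ∧ b.val = 11+2*k)
      ∨ (v.val = 20+2*k ∧ b.val = 18+2*k) ∨ (b.val = 6+2*k ∧ v.val = 5+2*k)
      ∨ (b.val = 13+2*k ∧ v.val = 11+2*k) ∨ (b.val = 20+2*k ∧ v.val = 18+2*k) := by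
    rcases he2 with h | h
    · rcases col_mono k v.val b.val h hcb.symm with h' | h' | h'
      · exact Or.inl h'
      · exact Or.inr (Or.inl h')
      · exact Or.inr (Or.inr (Or.inl h'))
    · rcases col_mono k b.val v.val h hcb with h' | h' | h'
      · exact Or.inr (Or.inr (Or.inr (Or.inl h')))
      · exact Or.inr (Or.inr (Or.inr (Or.inr (Or.inl h'))))
      · exact Or.inr (Or.inr (Or.inr (Or.inr (Or.inr h'))))
  have : a.val = b.val := by omega
  exact Fin.ext this


/-- T_k admits a 2-coloring with color classes differing in size by exactly 2
in which every monochromatic component has at most 2 vertices, but no such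
balanced 2-coloring. -/
theorem stmt6 (k : ℕ) :
    (∃ c : Fin (22+2*k) → Bool,
      |(Nat.card {v | c v = true} : ℤ) - (Nat.card {v | c v = false} : ℤ)| = 2 ∧
        MonoAtMost (Tgraph k) c 2) ∧
    ¬ ∃ c : Fin (22+2*k) → Bool,
      Nat.card {v | c v = true} = Nat.card {v | c v = false} ∧
        MonoAtMost (Tgraph k) c 2 := by
  constructor
  · exact ⟨fun v => col k v.val, cardDiff k _ (col_local k),
      monoAtMost_of_local _ _ (col_local k)⟩
  · rintro ⟨c, hbal, hmono⟩
    have h2 := cardDiff k c (local_of_monoAtMost _ _ hmono)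
    rw [hbal] at h2
    simp at h2
end

section
/- The vertex set of every cubic graph can be 2-colored so that every monochromatic connected component contains at most two vertices. -/
/-!
Colour the vertices so as to minimise the number of monochromatic edges. Recolouring a vertex
`v` with `s` neighbours of its own colour changes that number by `deg v - 2 s`, so at a minimum
`2 s ≤ deg v`; in a cubic graph every vertex then has at most one neighbour of its own colour,
and a graph of maximum degree one has no connected component with more than two vertices.
-/

open SimpleGraph

open Finset

namespace SimpleGraph

theorem Reachable.eq_or_adj_of_subsingleton_neighborSet {W : Type*} {H : SimpleGraph W}
    (hH : ∀ w, (H.neighborSet w).Subsingleton) {u w : W} (h : H.Reachable u w) :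
    u = w ∨ H.Adj u w := by
  obtain ⟨p⟩ := h
  induction p with
  | nil => exact Or.inl rfl
  | cons hux _ ih =>
    rcases ih with rfl | hxw
    · exact Or.inr hux
    · exact Or.inl (hH _ hux.symm hxw)

theorem ConnectedComponent.card_supp_le_two_of_subsingleton_neighborSet {W : Type*}
    {H : SimpleGraph W} (hH : ∀ w, (H.neighborSet w).Subsingleton) (C : H.ConnectedComponent) :
    Nat.card C.supp ≤ 2 := by
  obtain ⟨w, rfl⟩ := C.exists_rep
  have hsupp : (H.connectedComponentMk w).supp ⊆ insert w (H.neighborSet w) := fun u hu =>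
    ((ConnectedComponent.exact hu).eq_or_adj_of_subsingleton_neighborSet hH).imp id Adj.symm
  calc Nat.card (H.connectedComponentMk w).supp
      = (H.connectedComponentMk w).supp.ncard := Nat.card_coe_set_eq _
    _ ≤ (insert w (H.neighborSet w)).ncard := Set.ncard_le_ncard hsupp ((hH w).finite.insert w)
    _ ≤ (H.neighborSet w).ncard + 1 := Set.ncard_insert_le _ _
    _ ≤ 2 := by have := (Set.ncard_le_one (hH w).finite).2 (hH w); omega

variable {V : Type*} [Fintype V] (G : SimpleGraph V) [DecidableRel G.Adj]

def sameColorNeighbors (c : V → Bool) (v : V) : Finset V :=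
  {u ∈ G.neighborFinset v | c u = c v}

/-- Twice the number of monochromatic edges of the colouring `c`. -/
def monochromaticPairCount (c : V → Bool) : ℤ :=
  ∑ x, ∑ u ∈ G.neighborFinset x, if c u = c x then 1 else 0

theorem monochromaticPairCount_update_not [DecidableEq V] (c : V → Bool) (v : V) :
    G.monochromaticPairCount (Function.update c v (!c v)) =
      G.monochromaticPairCount c + 2 * (G.degree v - 2 * #(G.sameColorNeighbors c v)) := by
  -- `k y` is the change in the indicator of the pair `{v, y}` when `v` is recoloured.
  set k : V → ℤ := fun y => 1 - 2 * if c y = c v then 1 else 0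
  have pair : ∀ x u, G.Adj x u →
      (if Function.update c v (!c v) u = Function.update c v (!c v) x then 1 else 0 : ℤ) =
        (if c u = c x then 1 else 0) + (if x = v then k u else 0) + (if u = v then k x else 0) := by
    intro x u hxu
    have hne := hxu.ne
    by_cases hx : x = v
    · subst hx
      simp only [Function.update_self, Function.update_of_ne hne.symm, k]
      cases c x <;> cases c u <;> simp [hne.symm]
    by_cases hu : u = v
    · subst hu
      simp only [Function.update_self, Function.update_of_ne hx, k]
      cases c x <;> cases c u <;> simp [hx]
    · simp [hx, hu]
  have row : ∑ x, ∑ u ∈ G.neighborFinset x, (if x = v then k u else 0) =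
      ∑ u ∈ G.neighborFinset v, k u := by
    simp [Finset.sum_ite_irrel]
  have col : ∑ x, ∑ u ∈ G.neighborFinset x, (if u = v then k x else 0) =
      ∑ x ∈ G.neighborFinset v, k x := by
    simp only [mem_neighborFinset, Finset.sum_ite_eq', adj_comm]
    rw [← Finset.sum_filter, neighborFinset_eq_filter]
  have total : ∑ u ∈ G.neighborFinset v, k u = G.degree v - 2 * #(G.sameColorNeighbors c v) := by
    simp only [k, Finset.sum_sub_distrib, ← Finset.mul_sum, Finset.sum_const,
      card_neighborFinset_eq_degree, Finset.sum_boole, sameColorNeighbors, nsmul_eq_mul, mul_one]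
  unfold monochromaticPairCount
  rw [Finset.sum_congr rfl fun x _ => Finset.sum_congr rfl fun u hu =>
    pair x u ((G.mem_neighborFinset x u).1 hu)]
  simp only [Finset.sum_add_distrib, row, col, total]
  ring

theorem two_mul_card_sameColorNeighbors_le_degree {c : V → Bool}
    (hc : ∀ c', G.monochromaticPairCount c ≤ G.monochromaticPairCount c') (v : V) :
    2 * #(G.sameColorNeighbors c v) ≤ G.degree v := by
  classical
  have := hc (Function.update c v (!c v))
  rw [monochromaticPairCount_update_not] at this
  omega

theorem monoAtMost_two_of_card_sameColorNeighbors_le_one (c : V → Bool)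
    (hc : ∀ v, #(G.sameColorNeighbors c v) ≤ 1) : MonoAtMost G c 2 := by
  intro b C
  refine C.card_supp_le_two_of_subsingleton_neighborSet fun a x hx y hy => Subtype.ext ?_
  have mem : ∀ z : {v | c v = b}, (G.induce {v | c v = b}).Adj a z →
      z.val ∈ G.sameColorNeighbors c a := fun z hz => by
    simp only [sameColorNeighbors, Finset.mem_filter, mem_neighborFinset]
    exact ⟨hz, z.2.trans a.2.symm⟩
  exact Finset.card_le_one.1 (hc a) _ (mem x hx) _ (mem y hy)

end SimpleGraph

/-- Every cubic graph can be 2-colored so that every monochromatic component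
has at most two vertices. -/
theorem stmt7 {V : Type*} [Fintype V] (G : SimpleGraph V) (hG : IsCubic G) :
    ∃ c : V → Bool, MonoAtMost G c 2 := by
  classical
  obtain ⟨c, hc⟩ := Finite.exists_min G.monochromaticPairCount
  refine ⟨c, G.monoAtMost_two_of_card_sameColorNeighbors_le_one c fun v => ?_⟩
  have hdeg : G.degree v = 3 := by
    rw [← card_neighborSet_eq_degree, ← Nat.card_eq_fintype_card]
    exact hG v
  have := G.two_mul_card_sameColorNeighbors_le_degree hc v
  omega
end

section
/- Every cubic graph admits a valid factor. -/
/-!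
Since a cubic graph is 3-regular, Hall's theorem gives a permutation `σ` of the vertices with
every `v` adjacent to `σ v`. The edges `{v, σ v}` form a spanning subgraph whose components are
the cycles of `σ`: each cycle of length at least 3 becomes a cycle and each 2-cycle a single edge.
So every degree is 1 or 2, and a vertex of degree 1 lies in a component with two vertices, hence
no odd component has endpoints.
-/

open SimpleGraph

namespace SimpleGraph

open Finset

variable {V : Type*}

theorem _root_.IsCubic.isRegularOfDegree [Fintype V] {G : SimpleGraph V} [DecidableRel G.Adj]
    (hG : IsCubic G) : G.IsRegularOfDegree 3 := fun v => by
  rw [← card_neighborSet_eq_degree, ← Nat.card_eq_fintype_card, hG v]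

theorem IsRegularOfDegree.exists_perm_adj [Fintype V] {G : SimpleGraph V} [DecidableRel G.Adj]
    {k : ℕ} (hG : G.IsRegularOfDegree k) (hk : 0 < k) : ∃ σ : Equiv.Perm V, ∀ v, G.Adj v (σ v) := by
  classical
  suffices hall : ∀ A : Finset V, #A ≤ #{b | ∃ a ∈ A, G.Adj a b} by
    obtain ⟨f, hf, hadj⟩ := (Fintype.all_card_le_filter_rel_iff_exists_injective G.Adj).mp hall
    exact ⟨Equiv.ofBijective f hf.bijective_of_finite, hadj⟩
  intro A
  -- double count the edges from `A` to its neighbourhood: `k` at each vertex of `A`, at most `k`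
  -- at each neighbour
  refine Nat.le_of_mul_le_mul_right (card_mul_le_card_mul G.Adj (m := k) (n := k) ?_ ?_) hk
  · intro a ha
    rw [← hG.degree_eq a, ← card_neighborFinset_eq_degree]
    refine card_le_card fun b hb => ?_
    rw [mem_neighborFinset] at hb
    simpa [bipartiteAbove, hb] using ⟨a, ha, hb⟩
  · intro b _
    rw [← hG.degree_eq b, ← card_neighborFinset_eq_degree]
    refine card_le_card fun a ha => ?_
    simp_all [bipartiteBelow, adj_comm]

theorem ConnectedComponent.supp_subset_of_adj_mem {G : SimpleGraph V} {S : Set V} {u : V}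
    (hS : ∀ a ∈ S, ∀ b, G.Adj a b → b ∈ S) (hu : u ∈ S) :
    (G.connectedComponentMk u).supp ⊆ S := fun v hv => by
  obtain huv := (reachable_iff_reflTransGen u v).mp (ConnectedComponent.exact hv).symm
  clear hv
  induction huv with
  | refl => exact hu
  | tail _ hab ih => exact hS _ ih _ hab

def fromPerm (σ : Equiv.Perm V) : SimpleGraph V := fromRel fun a b => σ a = b

variable {σ : Equiv.Perm V}

theorem fromPerm_le {G : SimpleGraph V} (h : ∀ v, G.Adj v (σ v)) : fromPerm σ ≤ G := by
  rintro a b ⟨-, rfl | rfl⟩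
  exacts [h a, (h b).symm]

theorem neighborSet_fromPerm (hσ : ∀ v, σ v ≠ v) (v : V) :
    (fromPerm σ).neighborSet v = {σ v, σ.symm v} := by
  ext u
  simp only [mem_neighborSet, fromPerm, fromRel_adj, Set.mem_insert_iff, Set.mem_singleton_iff,
    ← Equiv.eq_symm_apply]
  grind

theorem card_neighborSet_fromPerm [DecidableEq V] (hσ : ∀ v, σ v ≠ v) (v : V) :
    Nat.card ((fromPerm σ).neighborSet v) = if σ (σ v) = v then 1 else 2 := by
  rw [neighborSet_fromPerm hσ, Nat.card_coe_set_eq]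
  split_ifs with h
  · rw [← (σ.eq_symm_apply.mpr h), Set.pair_eq_singleton, Set.ncard_singleton]
  · exact Set.ncard_pair (mt σ.eq_symm_apply.mp h)

theorem supp_connectedComponentMk_fromPerm (hσ : ∀ v, σ v ≠ v) {u : V} (hu : σ (σ u) = u) :
    ((fromPerm σ).connectedComponentMk u).supp = {u, σ u} := by
  refine subset_antisymm (ConnectedComponent.supp_subset_of_adj_mem ?_ (.inl rfl)) ?_
  · have hu' : σ.symm u = σ u := by rw [Equiv.symm_apply_eq, hu]
    rintro a (rfl | rfl) b hb <;>
      simp_all [← mem_neighborSet, neighborSet_fromPerm hσ]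
  · rintro v (rfl | rfl)
    · exact ConnectedComponent.connectedComponentMk_mem
    · have hadj : (fromPerm σ).Adj u (σ u) := ⟨(hσ u).symm, .inl rfl⟩
      exact ConnectedComponent.eq.mpr hadj.reachable.symm

theorem isValidFactor_fromPerm {G : SimpleGraph V} (h : ∀ v, G.Adj v (σ v)) :
    IsValidFactor G (fromPerm σ) := by
  classical
  have hσ : ∀ v, σ v ≠ v := fun v hv => G.irrefl (hv ▸ h v)
  refine ⟨fromPerm_le h, fun v => ?_, fun c hodd u _ hu _ _ hdeg _ _ => ?_⟩
  · rw [card_neighborSet_fromPerm hσ]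
    split_ifs <;> simp
  · have hu2 : σ (σ u) = u := by
      by_contra hne
      simp [card_neighborSet_fromPerm hσ, hne] at hdeg
    rw [← (ConnectedComponent.mem_supp_iff c u).mp hu, supp_connectedComponentMk_fromPerm hσ hu2,
      Nat.card_coe_set_eq, Set.ncard_pair (hσ u).symm] at hodd
    exact absurd hodd (by decide)

end SimpleGraph

/-- Every cubic graph admits a valid factor. -/
theorem stmt8 {V : Type*} [Fintype V] (G : SimpleGraph V) (hG : IsCubic G) :
    ∃ H : SimpleGraph V, IsValidFactor G H := by
  classical
  obtain ⟨σ, hσ⟩ := hG.isRegularOfDegree.exists_perm_adj three_pos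
  exact ⟨fromPerm σ, isValidFactor_fromPerm hσ⟩
end

section
/- Let G be a cubic graph and let P* be a valid factor of G with the minimum number of connected components. Then no edge of G joins two external vertices lying in two distinct components of P*. -/
open SimpleGraph

/-! Suppose `uv` is such an edge. Deleting one cycle edge at an external vertex on a cycle makes it
a path endpoint without disconnecting its component, so we may assume that `u` and `v` are
endpoints of paths. Adding `uv` then merges two components into one. The result may violate the
parity condition, but among the spanning subgraphs of `G` with all degrees in `{1, 2}` and at most
that many components, an edge-maximal one is a valid factor: an odd path whose endpoints are
adjacent in `G` could be closed into a cycle. That valid factor has fewer components than `H`. -/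

namespace SimpleGraph

variable {V : Type*} {H K : SimpleGraph V} {s t u v w : V}

lemma neighborSet_sup_edge_of_ne (hs : w ≠ s) (ht : w ≠ t) :
    (K ⊔ edge s t).neighborSet w = K.neighborSet w := by
  ext z
  simp [edge_adj, hs, ht]

lemma card_neighborSet_sup_edge [Finite V] (hst : s ≠ t) (hK : ¬ K.Adj s t) :
    Nat.card ((K ⊔ edge s t).neighborSet s) = Nat.card (K.neighborSet s) + 1 := by
  have hins : (K ⊔ edge s t).neighborSet s = insert t (K.neighborSet s) := by
    ext z
    simp only [mem_neighborSet, sup_adj, edge_adj, Set.mem_insert_iff]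
    grind
  rw [hins, Nat.card_coe_set_eq, Nat.card_coe_set_eq,
    Set.ncard_insert_of_notMem (s := K.neighborSet s) hK]

lemma neighborSet_deleteEdges_of_ne (hs : w ≠ s) (ht : w ≠ t) :
    (K.deleteEdges {s(s, t)}).neighborSet w = K.neighborSet w := by
  ext z
  simp [hs, ht]

lemma card_neighborSet_deleteEdges [Finite V] (hst : K.Adj s t) :
    Nat.card ((K.deleteEdges {s(s, t)}).neighborSet s) + 1 = Nat.card (K.neighborSet s) := by
  have hdiff : (K.deleteEdges {s(s, t)}).neighborSet s = K.neighborSet s \ {t} := by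
    ext z
    simp [hst.ne, eq_comm]
  rw [hdiff, Nat.card_coe_set_eq, Nat.card_coe_set_eq,
    Set.ncard_sdiff_singleton_add_one (s := K.neighborSet s) hst]

lemma Reachable.mem_of_forall_adj_mem {S : Set V} (hS : ∀ a b, a ∈ S → K.Adj a b → b ∈ S)
    (hu : u ∈ S) (h : K.Reachable u v) : v ∈ S := by
  rw [reachable_iff_reflTransGen] at h
  induction h with
  | refl => exact hu
  | tail _ hbc ih => exact hS _ _ ih hbc

lemma Reachable.deleteEdges_of_reachable {a b : V} (h : (K.deleteEdges {s(s, t)}).Reachable s t)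
    (hab : K.Reachable a b) : (K.deleteEdges {s(s, t)}).Reachable a b := by
  rw [reachable_iff_reflTransGen] at hab
  induction hab with
  | refl => rfl
  | @tail c d _ hcd ih =>
    refine ih.trans ?_
    by_cases he : s(c, d) = s(s, t)
    · rcases Sym2.eq_iff.1 he with ⟨rfl, rfl⟩ | ⟨rfl, rfl⟩
      exacts [h, h.symm]
    · exact Adj.reachable ((deleteEdges_adj ..).2 ⟨hcd, he⟩)

lemma card_connectedComponent_lt_of_reachable [Finite V]
    (hHK : ∀ a b, H.Reachable a b → K.Reachable a b) (hH : ¬ H.Reachable u v)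
    (hK : K.Reachable u v) : Nat.card K.ConnectedComponent < Nat.card H.ConnectedComponent := by
  let f : H.ConnectedComponent → K.ConnectedComponent :=
    ConnectedComponent.lift K.connectedComponentMk
      fun a b p _ ↦ ConnectedComponent.sound (hHK a b p.reachable)
  have hf : f.Surjective := ConnectedComponent.ind fun a ↦ ⟨H.connectedComponentMk a, rfl⟩
  refine (Nat.card_le_card_of_surjective f hf).lt_of_ne fun heq ↦ hH ?_
  exact ConnectedComponent.exact <|
    (hf.bijective_of_nat_card_le heq.ge).injective (ConnectedComponent.sound hK)

lemma card_supp_connectedComponentMk_eq_two (hxy : K.Adj s t)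
    (hs : Nat.card (K.neighborSet s) = 1) (ht : Nat.card (K.neighborSet t) = 1) :
    Nat.card (K.connectedComponentMk s).supp = 2 := by
  have hnbr : ∀ {a b}, K.Adj a b → Nat.card (K.neighborSet a) = 1 →
      K.neighborSet a = {b} := by
    intro a b hab ha
    obtain ⟨c, hc⟩ := Set.ncard_eq_one.1 ((Nat.card_coe_set_eq _).symm.trans ha)
    have hb : b ∈ K.neighborSet a := hab
    rw [hc, Set.mem_singleton_iff] at hb
    rw [hc, hb]
  have hclosed : ∀ a ∈ ({s, t} : Set V), K.neighborSet a ⊆ {s, t} := by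
    rintro a (rfl | rfl)
    · simp [hnbr hxy hs]
    · simp [hnbr hxy.symm ht]
  have hsupp : (K.connectedComponentMk s).supp = {s, t} := by
    ext z
    refine ⟨fun hz ↦ ?_, ?_⟩
    · exact (ConnectedComponent.exact hz).symm.mem_of_forall_adj_mem
        (fun a b ha hab ↦ hclosed a ha hab) (Set.mem_insert s _)
    · rintro (rfl | rfl)
      exacts [rfl, ConnectedComponent.sound hxy.reachable.symm]
  rw [hsupp, Nat.card_coe_set_eq, Set.ncard_pair hxy.ne]

end SimpleGraph

section Factors

variable {V : Type*} {G H K : SimpleGraph V} {s t u v : V}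

def IsPathCycleFactor (G K : SimpleGraph V) : Prop :=
  K ≤ G ∧ ∀ v, 1 ≤ Nat.card (K.neighborSet v) ∧ Nat.card (K.neighborSet v) ≤ 2

lemma IsValidFactor.isPathCycleFactor (h : IsValidFactor G H) : IsPathCycleFactor G H :=
  ⟨h.1, h.2.1⟩

lemma IsPathCycleFactor.sup_edge [Finite V] (hK : IsPathCycleFactor G K) (hG : G.Adj s t)
    (hst : ¬ K.Adj s t) (hs : Nat.card (K.neighborSet s) = 1)
    (ht : Nat.card (K.neighborSet t) = 1) : IsPathCycleFactor G (K ⊔ edge s t) := by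
  refine ⟨sup_le hK.1 ((edge_le_iff _).2 (Or.inr hG)), fun w ↦ ?_⟩
  by_cases hws : w = s
  · rw [hws, card_neighborSet_sup_edge hG.ne hst, hs]
    omega
  by_cases hwt : w = t
  · rw [hwt, edge_comm, card_neighborSet_sup_edge hG.ne.symm fun h ↦ hst h.symm, ht]
    omega
  rw [neighborSet_sup_edge_of_ne hws hwt]
  exact hK.2 w

lemma IsPathCycleFactor.deleteEdges [Finite V] (hH : IsPathCycleFactor G H) (hst : H.Adj s t)
    (hs : Nat.card (H.neighborSet s) = 2) (ht : Nat.card (H.neighborSet t) = 2) :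
    IsPathCycleFactor G (H.deleteEdges {s(s, t)}) := by
  refine ⟨(deleteEdges_le _).trans hH.1, fun w ↦ ?_⟩
  by_cases hws : w = s
  · have := card_neighborSet_deleteEdges hst
    rw [hws]
    omega
  by_cases hwt : w = t
  · have := card_neighborSet_deleteEdges hst.symm
    rw [hwt, Sym2.eq_swap]
    omega
  rw [neighborSet_deleteEdges_of_ne hws hwt]
  exact hH.2 w

lemma IsPathCycleFactor.isValidFactor_of_maximal [Finite V] {n : ℕ}
    (hK : Maximal (fun K ↦ IsPathCycleFactor G K ∧ numComponents K ≤ n) K) :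
    IsValidFactor G K := by
  refine ⟨hK.prop.1.1, hK.prop.1.2, fun c hodd x y hx hy hxy hx₁ hy₁ hGxy ↦ ?_⟩
  have hKxy : ¬ K.Adj x y := fun hKxy ↦ by
    rw [← (ConnectedComponent.mem_supp_iff c x).1 hx,
      card_supp_connectedComponentMk_eq_two hKxy hx₁ hy₁] at hodd
    exact Nat.not_odd_iff_even.2 even_two hodd
  refine hK.not_prop_of_gt (K.lt_sup_edge _ _ hxy hKxy)
    ⟨hK.prop.1.sup_edge hGxy hKxy hx₁ hy₁, ?_⟩
  exact (ConnectedComponent.card_le_card_of_le le_sup_left).trans hK.prop.2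

lemma IsPathCycleFactor.exists_isValidFactor_numComponents_le [Finite V]
    (hH : IsPathCycleFactor G H) :
    ∃ K, IsValidFactor G K ∧ numComponents K ≤ numComponents H := by
  obtain ⟨K, hK⟩ := Set.Finite.exists_maximal
    (Set.toFinite {K | IsPathCycleFactor G K ∧ numComponents K ≤ numComponents H})
    ⟨H, hH, le_rfl⟩
  exact ⟨K, IsPathCycleFactor.isValidFactor_of_maximal hK, hK.prop.2⟩

def IsEndOrOnCycle (H : SimpleGraph V) (v : V) : Prop :=
  Nat.card (H.neighborSet v) = 1 ∨ IsCycleComp H (H.connectedComponentMk v)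

lemma ExternalVtx.isEndOrOnCycle (h : ExternalVtx H v) : IsEndOrOnCycle H v :=
  h.imp_right And.right

lemma IsEndOrOnCycle.of_le {H' : SimpleGraph V} (hv : IsEndOrOnCycle H v) (hle : H' ≤ H)
    (heq : ∀ w, H.Reachable v w → H'.neighborSet w = H.neighborSet w) :
    IsEndOrOnCycle H' v := by
  rcases hv with hv | hv
  · exact Or.inl (heq v .rfl ▸ hv)
  · refine Or.inr fun w hw ↦ ?_
    have hvw : H.Reachable v w := ((ConnectedComponent.exact hw).mono hle).symm
    rw [heq w hvw]
    exact hv w (ConnectedComponent.sound hvw.symm)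

lemma IsCycleComp.reachable_deleteEdges [Finite V] {c : H.ConnectedComponent}
    (hc : IsCycleComp H c) (hs : s ∈ c.supp) (hst : H.Adj s t) :
    (H.deleteEdges {s(s, t)}).Reachable s t := by
  have hcyc : c.toSimpleGraph.spanningCoe.IsCycles := by
    rintro a ⟨b, hab⟩
    rw [mem_neighborSet, c.adj_spanningCoe_toSimpleGraph] at hab
    have hnbr : c.toSimpleGraph.spanningCoe.neighborSet a = H.neighborSet a := by
      ext b
      simp [c.adj_spanningCoe_toSimpleGraph, hab.1]
    rw [hnbr, ← Nat.card_coe_set_eq, hc a hab.1]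
  exact (hcyc.reachable_deleteEdges (c.adj_spanningCoe_toSimpleGraph.2 ⟨hs, hst⟩)).mono
    (deleteEdges_mono fun _ _ h ↦ (c.adj_spanningCoe_toSimpleGraph.1 h).2)

lemma IsPathCycleFactor.exists_le_card_neighborSet_eq_one [Finite V]
    (hH : IsPathCycleFactor G H) (hu : IsEndOrOnCycle H u) :
    ∃ H' ≤ H, IsPathCycleFactor G H' ∧ Nat.card (H'.neighborSet u) = 1 ∧
      (∀ a b, H.Reachable a b → H'.Reachable a b) ∧
      ∀ w, ¬ H.Reachable u w → H'.neighborSet w = H.neighborSet w := by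
  rcases hu with hu | hcyc
  · exact ⟨H, le_rfl, hH, hu, fun _ _ ↦ id, fun _ _ ↦ rfl⟩
  have hu₂ : Nat.card (H.neighborSet u) = 2 := hcyc u rfl
  obtain ⟨t, hut⟩ : (H.neighborSet u).Nonempty :=
    Set.nonempty_of_ncard_ne_zero (by rw [← Nat.card_coe_set_eq, hu₂]; omega)
  have ht₂ : Nat.card (H.neighborSet t) = 2 :=
    hcyc t (ConnectedComponent.sound hut.reachable.symm)
  have := card_neighborSet_deleteEdges hut
  refine ⟨H.deleteEdges {s(u, t)}, deleteEdges_le _, hH.deleteEdges hut hu₂ ht₂, by omega,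
    fun a b ↦ (hcyc.reachable_deleteEdges rfl hut).deleteEdges_of_reachable, fun w hw ↦ ?_⟩
  exact neighborSet_deleteEdges_of_ne (by rintro rfl; exact hw .rfl)
    (by rintro rfl; exact hw hut.reachable)

end Factors

theorem stmt9_general {V : Type*} [Fintype V] (G H : SimpleGraph V)
    (hmin : MinimizesComponents G H) (u v : V)
    (hu : ExternalVtx H u) (hv : ExternalVtx H v)
    (hcomp : H.connectedComponentMk u ≠ H.connectedComponentMk v) :
    ¬ G.Adj u v := by
  intro hadj
  have huv : ¬ H.Reachable u v := fun h ↦ hcomp (ConnectedComponent.sound h)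
  obtain ⟨H₁, hH₁, hfac₁, hu₁, hreach₁, heq₁⟩ :=
    hmin.1.isPathCycleFactor.exists_le_card_neighborSet_eq_one hu.isEndOrOnCycle
  have hv₁ : IsEndOrOnCycle H₁ v :=
    hv.isEndOrOnCycle.of_le hH₁ fun w hvw ↦ heq₁ w fun huw ↦ huv (huw.trans hvw.symm)
  obtain ⟨H₂, hH₂, hfac₂, hv₂, hreach₂, heq₂⟩ :=
    hfac₁.exists_le_card_neighborSet_eq_one hv₁
  have hu₂ : Nat.card (H₂.neighborSet u) = 1 :=
    heq₂ u (fun h ↦ huv (h.mono hH₁).symm) ▸ hu₁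
  have hH₂uv : ¬ H₂.Adj u v := fun h ↦ huv (h.reachable.mono (hH₂.trans hH₁))
  obtain ⟨K, hK, hKle⟩ :=
    (hfac₂.sup_edge hadj hH₂uv hu₂ hv₂).exists_isValidFactor_numComponents_le
  have hlt : numComponents (H₂ ⊔ edge u v) < numComponents H :=
    card_connectedComponent_lt_of_reachable
      (fun a b h ↦ (hreach₂ a b (hreach₁ a b h)).mono le_sup_left) huv
      (Adj.reachable (Or.inr ((edge_adj ..).2 ⟨Or.inl ⟨rfl, rfl⟩, hadj.ne⟩)))
  exact (hmin.2 K hK).not_gt (hKle.trans_lt hlt)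

/-- In a valid factor with the minimum number of components, no edge of G joins
two external vertices lying in distinct components. -/
theorem stmt9 {V : Type*} [Fintype V] (G H : SimpleGraph V) (hG : IsCubic G)
    (hmin : MinimizesComponents G H) (u v : V)
    (hu : ExternalVtx H u) (hv : ExternalVtx H v)
    (hcomp : H.connectedComponentMk u ≠ H.connectedComponentMk v) :
    ¬ G.Adj u v :=
  stmt9_general G H hmin u v hu hv hcomp
end
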